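/- arXiv:2605.26919 — 6 statements merged into one kernel-verified Lean document; each statement's English description precedes it below -/
import Mathlib

section
/- (Lemma 1, general interval regret bound.) Run Algorithm 1 and for t ∈ {1,…,T} let q_t(j) = Σ_{i∈[K]} w′_t(i,j) and ΔL_t(j) = L_{t+1}(j) − L_t(j) = Σ_{i∈[K]} 1[32 η(j)|r_t(i)| > 1] · w_t(i,j) · r_t(i). There exists an absolute constant C > 0 such that for every interval {t₁,…,t₂} ⊆ [T], every comparator u ∈ Δ_K, and every learning-rate index j* ∈ ⋂_{t=t₁}^{t₂} 𝒥_t, Σ_{t=t₁}^{t₂} ⟨ℓ_t, p_t − u⟩ ≤ 4 log(KMT)/η(j*) + 32 η(j*) Σ_{t=t₁}^{t₂} Σ_{i∈[K]} u(i) r_t(i)² + Σ_{j∈[M]} (q_{t₁}(j) − q_{t₂+1}(j))/η(j) + Σ_{t=t₁}^{t₂} Σ_{j∈[M]} ΔL_t(j) + C·log(KMT)/T². -/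
open Finset

namespace OMS

/-- Number of learning rates: `M = ⌈log₂ T²⌉`. -/
def numLR (T : ℕ) : ℕ := Nat.clog 2 (T ^ 2)

/-- Learning rate `η(j) = 2^j / (16 T)`; `j : Fin (numLR T)` represents index `j+1 ∈ [M]`. -/
noncomputable def lr (T : ℕ) (j : Fin (numLR T)) : ℝ := 2 ^ ((j : ℕ) + 1) / (16 * T)

/-- Lower threshold `ε = 1/(K·M·T³)`. -/
noncomputable def epsLB (K T : ℕ) : ℝ := 1 / (K * numLR T * T ^ 3)

/-- Probability simplex on `Fin K`. -/
def simplex (K : ℕ) : Set (Fin K → ℝ) :=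
  {p | (∀ i, 0 ≤ p i) ∧ ∑ i, p i = 1}

/-- Probability simplex on expert × learning-rate pairs. -/
def simplex2 (K T : ℕ) : Set (Fin K → Fin (numLR T) → ℝ) :=
  {w | (∀ i j, 0 ≤ w i j) ∧ ∑ i, ∑ j, w i j = 1}

/-- Weighted negative-entropy regularizer `ψ`. -/
noncomputable def psi (K T : ℕ) (w : Fin K → Fin (numLR T) → ℝ) : ℝ :=
  ∑ i, ∑ j, (1 / lr T j) * w i j * Real.log (w i j)

/-- Bregman divergence `D_ψ(y,x)` of the weighted negative-entropy regularizer. -/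
noncomputable def breg (K T : ℕ) (y x : Fin K → Fin (numLR T) → ℝ) : ℝ :=
  psi K T y - psi K T x -
    ∑ i, ∑ j, (1 / lr T j) * (Real.log (x i j) + 1) * (y i j - x i j)

/-- Decision set `Ω` for an active set `J` of learning rates. -/
def decisionSet (K T : ℕ) (J : Set (Fin (numLR T))) :
    Set (Fin K → Fin (numLR T) → ℝ) :=
  {w | w ∈ simplex2 K T ∧ (∀ i, ∀ j ∈ J, epsLB K T ≤ w i j) ∧
      (∀ i, ∀ j, j ∉ J → w i j = epsLB K T)}

/-- A run of Algorithm 1: trajectories of losses, predictions, weights, penalties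
and played distributions. -/
structure Run (K T : ℕ) where
  loss : ℕ → Fin K → ℝ
  pred : ℕ → Fin K → ℝ
  w' : ℕ → Fin K → Fin (numLR T) → ℝ
  w : ℕ → Fin K → Fin (numLR T) → ℝ
  L : ℕ → Fin (numLR T) → ℝ
  p : ℕ → Fin K → ℝ

variable {K T : ℕ}

/-- Prediction error `r_t(i) = ℓ_t(i) − m_t(i)`. -/
def Run.r (R : Run K T) (t : ℕ) (i : Fin K) : ℝ := R.loss t i - R.pred t i

/-- Active set `𝒥_t = {j : L_t(j) ≤ 1}`. -/
def Run.Jset (R : Run K T) (t : ℕ) : Set (Fin (numLR T)) := {j | R.L t j ≤ 1}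

open Classical in
/-- Active set `𝒥_t` as a finite set. -/
noncomputable def Run.Jfin (R : Run K T) (t : ℕ) : Finset (Fin (numLR T)) :=
  Finset.univ.filter fun j => R.L t j ≤ 1

/-- Correction term `a_t(i,j) = 32 η(j) r_t(i)²`. -/
noncomputable def Run.corr (R : Run K T) (t : ℕ) (i : Fin K) (j : Fin (numLR T)) : ℝ :=
  32 * lr T j * (R.r t i) ^ 2

open Classical in
/-- The constraints defining a run of Algorithm 1. -/
structure IsRun (R : Run K T) : Prop where
  loss_mem : ∀ t ∈ Finset.Icc 1 T, ∀ i, R.loss t i ∈ Set.Icc (0 : ℝ) 1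
  pred_mem : ∀ t ∈ Finset.Icc 1 T, ∀ i, R.pred t i ∈ Set.Icc (0 : ℝ) 1
  w'_init : ∀ i j, R.w' 1 i j = lr T j ^ 2 / (K * ∑ j', lr T j' ^ 2)
  L_init : ∀ j, R.L 1 j = 0
  w_mem : ∀ t ∈ Finset.Icc 1 T, R.w t ∈ decisionSet K T (R.Jset t)
  w_min : ∀ t ∈ Finset.Icc 1 T, ∀ v ∈ decisionSet K T (R.Jset t),
      (∑ i, ∑ j, R.pred t i * R.w t i j) + breg K T (R.w t) (R.w' t) ≤
      (∑ i, ∑ j, R.pred t i * v i j) + breg K T v (R.w' t)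
  p_def : ∀ t ∈ Finset.Icc 1 T, ∀ i, R.p t i =
      (∑ j ∈ R.Jfin t, R.w t i j) / (∑ i', ∑ j ∈ R.Jfin t, R.w t i' j)
  w'_mem : ∀ t ∈ Finset.Icc 1 T, R.w' (t + 1) ∈ decisionSet K T (R.Jset t)
  w'_min : ∀ t ∈ Finset.Icc 1 T, ∀ v ∈ decisionSet K T (R.Jset t),
      (∑ i, ∑ j, (R.loss t i + R.corr t i j) * R.w' (t + 1) i j) +
        breg K T (R.w' (t + 1)) (R.w' t) ≤
      (∑ i, ∑ j, (R.loss t i + R.corr t i j) * v i j) + breg K T v (R.w' t)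
  L_upd : ∀ t ∈ Finset.Icc 1 T, ∀ j, R.L (t + 1) j = R.L t j +
      ∑ i, (if 1 < 32 * lr T j * |R.r t i| then R.w t i j * R.r t i else 0)

end OMS



lemma slope_nonneg {f : ℝ → ℝ} {d : ℝ} (hf : HasDerivAt f d 0)
    (h : ∀ x ∈ Set.Ioc (0:ℝ) 1, f 0 ≤ f x) : 0 ≤ d := by
  have h1 : Filter.Tendsto (slope f 0) (nhdsWithin 0 (Set.Ioi 0)) (nhds d) := by
    refine (hasDerivAt_iff_tendsto_slope.1 hf).mono_left (nhdsWithin_mono _ ?_)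
    exact fun x hx => Set.mem_compl_singleton_iff.mpr (LT.lt.ne' hx)
  refine ge_of_tendsto h1 ?_
  filter_upwards [Ioc_mem_nhdsGT_of_mem (by norm_num : (0:ℝ) ∈ Set.Ico (0:ℝ) 1)] with x hx
  rw [slope_def_field]
  have := h x hx
  have hx0 : 0 < x := hx.1
  rw [div_eq_mul_inv]
  simp only [sub_zero]
  have : 0 ≤ f x - f 0 := by linarith
  positivity

lemma fenchel {η x y g : ℝ} (hη : 0 < η) (hx : 0 < x) (hy : 0 < y) :
    g*(x-y) - (1/η)*(y*Real.log y - y*Real.log x - y + x)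
      ≤ (1/η)*x*(Real.exp (-(η*g)) - 1 + η*g) := by
  set z := η * g with hz
  have key : y * (1 - z + Real.log (x/y)) ≤ x * Real.exp (-z) := by
    have h1 : 1 + (-z + Real.log (x/y)) ≤ Real.exp (-z + Real.log (x/y)) := by
      have := Real.add_one_le_exp (-z + Real.log (x/y)); linarith
    have h2 : Real.exp (-z + Real.log (x/y)) = Real.exp (-z) * (x/y) := by
      rw [Real.exp_add, Real.exp_log (by positivity)]
    calc y * (1 - z + Real.log (x/y)) = y * (1 + (-z + Real.log (x/y))) := by ring
      _ ≤ y * (Real.exp (-z) * (x/y)) := by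
          rw [h2] at h1; exact mul_le_mul_of_nonneg_left h1 hy.le
      _ = x * Real.exp (-z) := by field_simp
  have hlog : Real.log (x/y) = Real.log x - Real.log y := Real.log_div hx.ne' hy.ne'
  rw [hlog] at key
  have main : z*(x-y) - (y*Real.log y - y*Real.log x - y + x)
      ≤ x*(Real.exp (-z) - 1 + z) := by nlinarith [key]
  calc g*(x-y) - (1/η)*(y*Real.log y - y*Real.log x - y + x)
      = (1/η)*(z*(x-y) - (y*Real.log y - y*Real.log x - y + x)) := by
        field_simp; ring
    _ ≤ (1/η)*(x*(Real.exp (-z) - 1 + z)) := by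
        apply mul_le_mul_of_nonneg_left main; positivity
    _ = (1/η)*x*(Real.exp (-z) - 1 + z) := by ring

lemma exp_quad {z : ℝ} (hz : -1 ≤ z) : Real.exp (-z) - 1 + z ≤ z^2 := by
  rcases le_or_gt z 1 with h1 | h1
  · have habs : |(-z)| ≤ 1 := by rw [abs_neg, abs_le]; exact ⟨hz, h1⟩
    have := Real.exp_bound habs (by norm_num : 0 < 2)
    have h2 : |Real.exp (-z) - (1 + -z)| ≤ |(-z)|^2 * ((2+1)/((2:ℕ).factorial * 2)) := by
      convert this using 2
      simp [Finset.sum_range_succ]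
      ring
    rw [abs_le] at h2
    have h3 : |(-z)|^2 = z^2 := by rw [abs_neg, sq_abs]
    rw [h3] at h2
    have := h2.2
    norm_num at this
    nlinarith
  · have : Real.exp (-z) ≤ 1 := Real.exp_le_one_iff.mpr (by linarith)
    nlinarith

lemma exp_lin {z : ℝ} (hz : 0 ≤ z) : Real.exp (-z) - 1 + z ≤ z := by
  have : Real.exp (-z) ≤ 1 := Real.exp_le_one_iff.mpr (by linarith)
  linarith

lemma kl_nonneg {x y : ℝ} (hx : 0 < x) (hy : 0 ≤ y) :
    0 ≤ y*Real.log y - y*Real.log x - y + x := by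
  rcases eq_or_lt_of_le hy with h | h
  · simp [← h]; linarith
  · have h1 : 1 + Real.log (x/y) ≤ Real.exp (Real.log (x/y)) := by
      have := Real.add_one_le_exp (Real.log (x/y)); linarith
    rw [Real.exp_log (by positivity), Real.log_div hx.ne' h.ne'] at h1
    have := mul_le_mul_of_nonneg_left h1 h.le
    rw [mul_div_cancel₀ _ h.ne'] at this
    nlinarith

/-- Per-coordinate stability bound with clipping. -/
lemma coord_stab {η w y r : ℝ} (hη : 0 < η) (hw : 0 < w) (hy : 0 < y) (hr : |r| ≤ 1) :
    (r + 32*η*r^2)*(w - y) - (1/η)*(y*Real.log y - y*Real.log w - y + w)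
      ≤ (if 1 < 32*η*|r| then w*r else 0) + 32*η*w*r^2 := by
  set g := r + 32*η*r^2 with hgdef
  clear_value g
  have base := fenchel (g := g) hη hw hy
  have habsr : r ≤ |r| ∧ -|r| ≤ r := ⟨le_abs_self r, neg_abs_le r⟩
  have hsq : r^2 = |r|^2 := (sq_abs r).symm
  by_cases hc : 1 < 32*η*|r|
  · have hg : 0 ≤ g := by
      rcases le_or_gt 0 r with h|h
      · have : 0 ≤ 32*η*r^2 := by positivity
        simp only [hgdef]; linarith
      · have habs : |r| = -r := abs_of_neg h
        have : 32*η*r^2 = (32*η*|r|)*|r| := by rw [habs]; ring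
        simp only [hgdef]
        nlinarith
    have hz : (0:ℝ) ≤ η*g := by positivity
    have hquad := exp_lin hz
    have step : (1/η)*w*(Real.exp (-(η*g)) - 1 + η*g) ≤ (1/η)*w*(η*g) := by
      apply mul_le_mul_of_nonneg_left hquad; positivity
    have heq : (1/η)*w*(η*g) = w*r + 32*η*w*r^2 := by
      simp only [hgdef]; field_simp
    rw [if_pos hc]
    calc g*(w - y) - (1/η)*(y*Real.log y - y*Real.log w - y + w)
        ≤ (1/η)*w*(Real.exp (-(η*g)) - 1 + η*g) := base
      _ ≤ (1/η)*w*(η*g) := step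
      _ = w*r + 32*η*w*r^2 := heq
  · have habs : 32*η*|r| ≤ 1 := le_of_not_gt hc
    have haux : 32*η*r^2 ≤ |r| := by nlinarith [abs_nonneg r]
    have hgabs : |g| ≤ 2*|r| := by
      have h1 : |g| ≤ |r| + |32*η*r^2| := by rw [hgdef]; exact abs_add_le _ _
      have h2 : |32*η*r^2| = 32*η*r^2 := abs_of_nonneg (by positivity)
      linarith [h1, h2.le, haux]
    have hetar : η*|r| ≤ 1/32 := by linarith
    have hz1 : -1 ≤ η*g := by
      have : |η*g| ≤ η*(2*|r|) := by
        rw [abs_mul, abs_of_pos hη]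
        exact mul_le_mul_of_nonneg_left hgabs hη.le
      have h3 : η*(2*|r|) ≤ 1/16 := by linarith
      have h4 := (abs_le.1 (le_trans this h3)).1
      linarith
    have hquad := exp_quad hz1
    have step : (1/η)*w*(Real.exp (-(η*g)) - 1 + η*g) ≤ (1/η)*w*((η*g)^2) := by
      apply mul_le_mul_of_nonneg_left hquad; positivity
    have heq : (1/η)*w*((η*g)^2) = η*w*g^2 := by field_simp
    have hg2 : g^2 ≤ 4*r^2 := by
      have hh := abs_le.1 hgabs
      have := sq_le_sq' hh.1 hh.2
      calc g^2 ≤ (2*|r|)^2 := this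
        _ = 4*r^2 := by rw [hsq]; ring
    have hfin : η*w*g^2 ≤ 32*η*w*r^2 := by
      have h5 := mul_le_mul_of_nonneg_left hg2 (show (0:ℝ) ≤ η*w by positivity)
      nlinarith [mul_nonneg (mul_nonneg hη.le hw.le) (sq_nonneg r)]
    rw [if_neg hc]
    calc g*(w - y) - (1/η)*(y*Real.log y - y*Real.log w - y + w)
        ≤ (1/η)*w*(Real.exp (-(η*g)) - 1 + η*g) := base
      _ ≤ (1/η)*w*((η*g)^2) := step
      _ = η*w*g^2 := heq
      _ ≤ 32*η*w*r^2 := hfin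
      _ = 0 + 32*η*w*r^2 := by ring
section Helpers
open OMS
variable {K T : ℕ}

lemma breg_eq (y x : Fin K → Fin (numLR T) → ℝ) :
    breg K T y x = ∑ i, ∑ j, (1 / lr T j) *
      (y i j * Real.log (y i j) - y i j * Real.log (x i j) - y i j + x i j) := by
  unfold breg psi
  rw [← Finset.sum_sub_distrib, ← Finset.sum_sub_distrib]
  refine Finset.sum_congr rfl fun i _ => ?_
  rw [← Finset.sum_sub_distrib, ← Finset.sum_sub_distrib]
  refine Finset.sum_congr rfl fun j _ => ?_
  ring

lemma three_point (x y z : Fin K → Fin (numLR T) → ℝ) :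
    ∑ i, ∑ j, (1 / lr T j) * (Real.log (y i j) - Real.log (x i j)) * (z i j - y i j)
      = breg K T z x - breg K T z y - breg K T y x := by
  rw [breg_eq, breg_eq, breg_eq, ← Finset.sum_sub_distrib, ← Finset.sum_sub_distrib]
  refine Finset.sum_congr rfl fun i _ => ?_
  rw [← Finset.sum_sub_distrib, ← Finset.sum_sub_distrib]
  refine Finset.sum_congr rfl fun j _ => ?_
  ring

lemma convex_decisionSet (J : Set (Fin (numLR T))) : Convex ℝ (decisionSet K T J) := by
  intro w₁ h₁ w₂ h₂ a b ha hb hab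
  obtain ⟨⟨hn1, hs1⟩, hl1, he1⟩ := h₁
  obtain ⟨⟨hn2, hs2⟩, hl2, he2⟩ := h₂
  refine ⟨⟨fun i j => ?_, ?_⟩, fun i j hj => ?_, fun i j hj => ?_⟩
  · simp only [Pi.add_apply, Pi.smul_apply, smul_eq_mul]
    have := hn1 i j; have := hn2 i j; positivity
  · simp only [Pi.add_apply, Pi.smul_apply, smul_eq_mul]
    rw [show ∀ (f g : Fin K → Fin (numLR T) → ℝ), (∑ i, ∑ j, (a * f i j + b * g i j)) =
        a * (∑ i, ∑ j, f i j) + b * (∑ i, ∑ j, g i j) from ?_]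
    · rw [hs1, hs2]; linarith
    · intro f g
      simp only [Finset.sum_add_distrib, Finset.mul_sum]
  · simp only [Pi.add_apply, Pi.smul_apply, smul_eq_mul]
    have h1 := hl1 i j hj; have h2 := hl2 i j hj
    calc epsLB K T = a * epsLB K T + b * epsLB K T := by rw [← add_mul, hab, one_mul]
      _ ≤ a * w₁ i j + b * w₂ i j := by
          gcongr <;> first | exact h1 | exact h2
  · simp only [Pi.add_apply, Pi.smul_apply, smul_eq_mul]
    rw [he1 i j hj, he2 i j hj, ← add_mul, hab, one_mul]

end Helpers
section VI
open OMS
variable {K T : ℕ}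

lemma sum_split (b p : Fin K → Fin (numLR T) → ℝ) :
    (∑ i, ∑ j, (b i j * p i j + (1 / lr T j) * (p i j * Real.log (p i j))))
      = (∑ i, ∑ j, b i j * p i j) + psi K T p := by
  unfold psi
  rw [← Finset.sum_add_distrib]
  refine Finset.sum_congr rfl fun i _ => ?_
  rw [← Finset.sum_add_distrib]
  refine Finset.sum_congr rfl fun j _ => ?_
  ring

/-- Variational inequality at a positive minimizer of a linear + entropy objective. -/
lemma vi {S : Set (Fin K → Fin (numLR T) → ℝ)} (hS : Convex ℝ S)
    {b w : Fin K → Fin (numLR T) → ℝ} (hw : w ∈ S) (hpos : ∀ i j, 0 < w i j)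
    (hmin : ∀ v ∈ S, (∑ i, ∑ j, b i j * w i j) + psi K T w ≤
      (∑ i, ∑ j, b i j * v i j) + psi K T v)
    {v : Fin K → Fin (numLR T) → ℝ} (hv : v ∈ S) :
    0 ≤ ∑ i, ∑ j, (b i j + (1 / lr T j) * (Real.log (w i j) + 1)) * (v i j - w i j) := by
  set f : ℝ → ℝ := fun lam => ∑ i, ∑ j,
    (b i j * (w i j + lam * (v i j - w i j)) +
      (1 / lr T j) * ((w i j + lam * (v i j - w i j)) *
        Real.log (w i j + lam * (v i j - w i j)))) with hf
  have hderiv : HasDerivAt f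
      (∑ i, ∑ j, (b i j + (1 / lr T j) * (Real.log (w i j) + 1)) * (v i j - w i j)) 0 := by
    rw [hf]
    apply HasDerivAt.fun_sum
    intro i _
    apply HasDerivAt.fun_sum
    intro j _
    have hp : HasDerivAt (fun lam : ℝ => w i j + lam * (v i j - w i j)) (v i j - w i j) 0 := by
      simpa using ((hasDerivAt_id (0:ℝ)).mul_const (v i j - w i j)).const_add (w i j)
    have hne : w i j + 0 * (v i j - w i j) ≠ 0 := by simpa using (hpos i j).ne'
    have hlog := hp.log hne
    have hmul := hp.mul hlog
    have h1 := hp.const_mul (b i j)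
    have h2 := hmul.const_mul (1 / lr T j)
    have hsum := h1.add h2
    have hwij : w i j ≠ 0 := (hpos i j).ne'
    simp only [zero_mul, add_zero] at hsum
    have hcan : w i j * ((v i j - w i j) / w i j) = v i j - w i j := by
      field_simp
    rw [hcan] at hsum
    have hfinal : (b i j + (1 / lr T j) * (Real.log (w i j) + 1)) * (v i j - w i j)
        = b i j * (v i j - w i j) +
          1 / lr T j * ((v i j - w i j) * Real.log (w i j) + (v i j - w i j)) := by ring
    rw [hfinal]
    exact hsum
  have hmono : ∀ lam ∈ Set.Ioc (0:ℝ) 1, f 0 ≤ f lam := by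
    intro lam hlam
    have hmem : (fun i j => w i j + lam * (v i j - w i j)) ∈ S := by
      have hcvx := hS hw hv (by linarith [hlam.2] : (0:ℝ) ≤ 1 - lam) (le_of_lt hlam.1)
        (by ring : (1 - lam) + lam = 1)
      convert hcvx using 1
      funext i j
      simp only [Pi.add_apply, Pi.smul_apply, smul_eq_mul]
      ring
    have hcmp := hmin _ hmem
    have e0 : f 0 = (∑ i, ∑ j, b i j * w i j) + psi K T w := by
      rw [hf]
      simp only [zero_mul, add_zero]
      exact sum_split b w
    have e1 : f lam = (∑ i, ∑ j, b i j * (w i j + lam * (v i j - w i j))) +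
        psi K T (fun i j => w i j + lam * (v i j - w i j)) := by
      rw [hf]
      exact sum_split b _
    rw [e0, e1]
    exact hcmp
  exact slope_nonneg hderiv hmono

end VI
section Round
open OMS
variable {K T : ℕ}

lemma sum2_ext {f g : Fin K → Fin (numLR T) → ℝ} (h : ∀ i j, f i j = g i j) :
    (∑ i, ∑ j, f i j) = ∑ i, ∑ j, g i j :=
  Finset.sum_congr rfl fun i _ => Finset.sum_congr rfl fun j _ => h i j

lemma sum2_sub (f g : Fin K → Fin (numLR T) → ℝ) :
    (∑ i, ∑ j, (f i j - g i j)) = (∑ i, ∑ j, f i j) - ∑ i, ∑ j, g i j := by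
  rw [← Finset.sum_sub_distrib]
  exact Finset.sum_congr rfl fun i _ => Finset.sum_sub_distrib _ _

lemma sum2_add (f g : Fin K → Fin (numLR T) → ℝ) :
    (∑ i, ∑ j, (f i j + g i j)) = (∑ i, ∑ j, f i j) + ∑ i, ∑ j, g i j := by
  rw [← Finset.sum_add_distrib]
  exact Finset.sum_congr rfl fun i _ => Finset.sum_add_distrib

lemma sum2_neg (f : Fin K → Fin (numLR T) → ℝ) :
    (∑ i, ∑ j, (-(f i j))) = -∑ i, ∑ j, f i j := by
  simp

lemma sum2_le {f g : Fin K → Fin (numLR T) → ℝ} (h : ∀ i j, f i j ≤ g i j) :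
    (∑ i, ∑ j, f i j) ≤ ∑ i, ∑ j, g i j :=
  Finset.sum_le_sum fun i _ => Finset.sum_le_sum fun j _ => h i j

lemma sum2_nonneg {f : Fin K → Fin (numLR T) → ℝ} (h : ∀ i j, 0 ≤ f i j) :
    0 ≤ ∑ i, ∑ j, f i j :=
  Finset.sum_nonneg fun i _ => Finset.sum_nonneg fun j _ => h i j

lemma breg_nonneg {x y : Fin K → Fin (numLR T) → ℝ} (hlr : ∀ j, 0 < lr T j)
    (hx : ∀ i j, 0 < x i j) (hy : ∀ i j, 0 ≤ y i j) : 0 ≤ breg K T y x := by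
  rw [breg_eq]
  refine sum2_nonneg fun i j => ?_
  have := kl_nonneg (hx i j) (hy i j)
  have hc : 0 ≤ 1 / lr T j := le_of_lt (by have := hlr j; positivity)
  exact mul_nonneg hc this

lemma mem_decisionSet_eps_le {J : Set (Fin (numLR T))} {w : Fin K → Fin (numLR T) → ℝ}
    (hw : w ∈ decisionSet K T J) : ∀ i j, epsLB K T ≤ w i j := by
  intro i j
  by_cases hj : j ∈ J
  · exact hw.2.1 i j hj
  · rw [hw.2.2 i j hj]

lemma min_transfer {S : Set (Fin K → Fin (numLR T) → ℝ)}
    {coeff x w : Fin K → Fin (numLR T) → ℝ}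
    (hmin : ∀ v ∈ S, (∑ i, ∑ j, coeff i j * w i j) + breg K T w x ≤
      (∑ i, ∑ j, coeff i j * v i j) + breg K T v x) :
    ∀ v ∈ S, (∑ i, ∑ j, (coeff i j - (1 / lr T j) * (Real.log (x i j) + 1)) * w i j) + psi K T w
      ≤ (∑ i, ∑ j, (coeff i j - (1 / lr T j) * (Real.log (x i j) + 1)) * v i j) + psi K T v := by
  have key : ∀ y : Fin K → Fin (numLR T) → ℝ,
      (∑ i, ∑ j, (coeff i j - (1 / lr T j) * (Real.log (x i j) + 1)) * y i j) + psi K T y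
      = ((∑ i, ∑ j, coeff i j * y i j) + breg K T y x)
        + (psi K T x - ∑ i, ∑ j, (1 / lr T j) * (Real.log (x i j) + 1) * x i j) := by
    intro y
    unfold breg
    have e1 : (∑ i, ∑ j, (coeff i j - (1 / lr T j) * (Real.log (x i j) + 1)) * y i j)
        = (∑ i, ∑ j, coeff i j * y i j)
          - ∑ i, ∑ j, (1 / lr T j) * (Real.log (x i j) + 1) * y i j := by
      rw [← sum2_sub]; exact sum2_ext fun i j => by ring
    have e2 : (∑ i, ∑ j, (1 / lr T j) * (Real.log (x i j) + 1) * (y i j - x i j))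
        = (∑ i, ∑ j, (1 / lr T j) * (Real.log (x i j) + 1) * y i j)
          - ∑ i, ∑ j, (1 / lr T j) * (Real.log (x i j) + 1) * x i j := by
      rw [← sum2_sub]; exact sum2_ext fun i j => by ring
    rw [e1, e2]; ring
  intro v hv
  have h := hmin v hv
  rw [key v, key w]
  linarith

/-- The per-round optimistic OMD inequality. -/
lemma round_ineq (R : Run K T) (hR : IsRun R) {t : ℕ} (ht : t ∈ Finset.Icc 1 T)
    (hlr : ∀ j, 0 < lr T j) (heps : 0 < epsLB K T)
    {ut : Fin K → Fin (numLR T) → ℝ} (hut : ut ∈ decisionSet K T (R.Jset t))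
    (hw'pos : ∀ i j, 0 < R.w' t i j) :
    (∑ i, ∑ j, (R.loss t i + R.corr t i j) * (R.w t i j - ut i j))
      ≤ breg K T ut (R.w' t) - breg K T ut (R.w' (t+1))
        + ((∑ i, ∑ j, (R.r t i + R.corr t i j) * (R.w t i j - R.w' (t+1) i j))
        - breg K T (R.w' (t+1)) (R.w t)) := by
  set S := decisionSet K T (R.Jset t) with hS
  have hconv : Convex ℝ S := convex_decisionSet _
  have hwmem : R.w t ∈ S := hR.w_mem t ht
  have hw'mem : R.w' (t+1) ∈ S := hR.w'_mem t ht
  have hwpos : ∀ i j, 0 < R.w t i j :=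
    fun i j => lt_of_lt_of_le heps (mem_decisionSet_eps_le hwmem i j)
  have hw'1pos : ∀ i j, 0 < R.w' (t+1) i j :=
    fun i j => lt_of_lt_of_le heps (mem_decisionSet_eps_le hw'mem i j)
  -- VI for the w_t step
  have hmin1 := min_transfer (S := S) (coeff := fun i j => R.pred t i)
    (x := R.w' t) (w := R.w t) (hR.w_min t ht)
  have hvi1 := vi hconv hwmem hwpos hmin1 hw'mem
  -- VI for the w'_{t+1} step
  have hmin2 := min_transfer (S := S) (coeff := fun i j => R.loss t i + R.corr t i j)
    (x := R.w' t) (w := R.w' (t+1)) (hR.w'_min t ht)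
  have hvi2 := vi hconv hw'mem hw'1pos hmin2 hut
  -- rewrite hvi1
  have e1 : (∑ i, ∑ j, ((fun i j => R.pred t i) i j
        - (1 / lr T j) * (Real.log (R.w' t i j) + 1)
        + (1 / lr T j) * (Real.log (R.w t i j) + 1)) * (R.w' (t+1) i j - R.w t i j))
      = (∑ i, ∑ j, R.pred t i * (R.w' (t+1) i j - R.w t i j))
        + ∑ i, ∑ j, (1 / lr T j) * (Real.log (R.w t i j) - Real.log (R.w' t i j))
            * (R.w' (t+1) i j - R.w t i j) := by
    rw [← sum2_add]; exact sum2_ext fun i j => by ring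
  rw [e1] at hvi1
  rw [three_point (R.w' t) (R.w t) (R.w' (t+1))] at hvi1
  -- rewrite hvi2
  have e2 : (∑ i, ∑ j, ((fun i j => R.loss t i + R.corr t i j) i j
        - (1 / lr T j) * (Real.log (R.w' t i j) + 1)
        + (1 / lr T j) * (Real.log (R.w' (t+1) i j) + 1)) * (ut i j - R.w' (t+1) i j))
      = (∑ i, ∑ j, (R.loss t i + R.corr t i j) * (ut i j - R.w' (t+1) i j))
        + ∑ i, ∑ j, (1 / lr T j) * (Real.log (R.w' (t+1) i j) - Real.log (R.w' t i j))
            * (ut i j - R.w' (t+1) i j) := by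
    rw [← sum2_add]; exact sum2_ext fun i j => by ring
  rw [e2] at hvi2
  rw [three_point (R.w' t) (R.w' (t+1)) ut] at hvi2
  have hDnn : 0 ≤ breg K T (R.w t) (R.w' t) :=
    breg_nonneg hlr hw'pos (fun i j => (hwpos i j).le)
  -- splitting equalities
  have E1 : (∑ i, ∑ j, (R.loss t i + R.corr t i j) * (R.w t i j - ut i j))
      = (∑ i, ∑ j, (R.loss t i + R.corr t i j) * (R.w t i j - R.w' (t+1) i j))
        + ∑ i, ∑ j, (R.loss t i + R.corr t i j) * (R.w' (t+1) i j - ut i j) := by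
    rw [← sum2_add]; exact sum2_ext fun i j => by ring
  have E2 : (∑ i, ∑ j, (R.loss t i + R.corr t i j) * (R.w t i j - R.w' (t+1) i j))
      = (∑ i, ∑ j, (R.r t i + R.corr t i j) * (R.w t i j - R.w' (t+1) i j))
        + ∑ i, ∑ j, R.pred t i * (R.w t i j - R.w' (t+1) i j) := by
    rw [← sum2_add]; refine sum2_ext fun i j => ?_; unfold Run.r; ring
  have E3 : (∑ i, ∑ j, R.pred t i * (R.w' (t+1) i j - R.w t i j))
      = - ∑ i, ∑ j, R.pred t i * (R.w t i j - R.w' (t+1) i j) := by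
    rw [sum2_ext (g := fun i j => -(R.pred t i * (R.w t i j - R.w' (t+1) i j)))
      fun i j => by ring]
    exact sum2_neg _
  have E4 : (∑ i, ∑ j, (R.loss t i + R.corr t i j) * (ut i j - R.w' (t+1) i j))
      = - ∑ i, ∑ j, (R.loss t i + R.corr t i j) * (R.w' (t+1) i j - ut i j) := by
    rw [sum2_ext (g := fun i j => -((R.loss t i + R.corr t i j) * (R.w' (t+1) i j - ut i j)))
      fun i j => by ring]
    exact sum2_neg _
  rw [E3] at hvi1
  rw [E4] at hvi2
  rw [E1, E2]
  linarith [hvi1, hvi2, hDnn]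

end Round
section Consts
open OMS
variable {K T : ℕ}

lemma numLR_ge_two (hT : 2 ≤ T) : 2 ≤ numLR T := by
  unfold numLR
  have h4 : 4 ≤ T ^ 2 := by nlinarith
  calc 2 = Nat.clog 2 4 := by rw [show (4:ℕ) = 2^2 by norm_num, Nat.clog_pow] <;> norm_num
    _ ≤ Nat.clog 2 (T ^ 2) := Nat.clog_mono_right 2 h4

lemma numLR_pos (hT : 2 ≤ T) : 0 < numLR T := lt_of_lt_of_le (by norm_num) (numLR_ge_two hT)

lemma T_sq_le_pow (hT : 2 ≤ T) : (T:ℝ)^2 ≤ 2 ^ (numLR T) := by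
  have h := Nat.le_pow_clog (by norm_num : 1 < 2) (T ^ 2)
  have := Nat.cast_le (α := ℝ).mpr h
  push_cast at this
  exact this

lemma pow_le_two_T_sq (hT : 2 ≤ T) : (2:ℝ) ^ (numLR T) ≤ 2 * (T:ℝ)^2 := by
  have h2 : 2 ≤ T ^ 2 := by nlinarith
  have h := Nat.pow_pred_clog_lt_self (by norm_num : 1 < 2) h2
  have hM : 1 ≤ numLR T := le_trans (by norm_num) (numLR_ge_two hT)
  have hsplit : 2 ^ (numLR T) = 2 * 2 ^ (numLR T - 1) := by
    rw [← pow_succ']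
    congr 1
    omega
  have hnat : 2 ^ (numLR T) ≤ 2 * T ^ 2 := by
    rw [hsplit]
    have : 2 ^ (numLR T - 1) ≤ T ^ 2 := le_of_lt h
    omega
  have := Nat.cast_le (α := ℝ).mpr hnat
  push_cast at this
  convert this using 2 <;> norm_num

lemma lr_pos (hT : 2 ≤ T) (j : Fin (numLR T)) : 0 < lr T j := by
  unfold lr
  have hT0 : (0:ℝ) < T := by exact_mod_cast lt_of_lt_of_le (by norm_num) hT
  positivity

lemma lr_le (hT : 2 ≤ T) (j : Fin (numLR T)) : lr T j ≤ (T:ℝ)/8 := by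
  have hT0 : (0:ℝ) < T := by exact_mod_cast lt_of_lt_of_le (by norm_num) hT
  unfold lr
  rw [div_le_div_iff₀ (by positivity) (by norm_num)]
  have h1 : (2:ℝ) ^ ((j:ℕ) + 1) ≤ 2 ^ (numLR T) := by
    apply pow_le_pow_right₀ (by norm_num)
    have := j.2
    omega
  have h2 := pow_le_two_T_sq hT
  nlinarith

lemma lr_ge (hT : 2 ≤ T) (j : Fin (numLR T)) : 1/(8*(T:ℝ)) ≤ lr T j := by
  have hT0 : (0:ℝ) < T := by exact_mod_cast lt_of_lt_of_le (by norm_num) hT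
  unfold lr
  rw [div_le_div_iff₀ (by positivity) (by positivity)]
  have h1 : (2:ℝ) ≤ 2 ^ ((j:ℕ) + 1) := by
    calc (2:ℝ) = 2^1 := by norm_num
      _ ≤ 2 ^ ((j:ℕ) + 1) := by apply pow_le_pow_right₀ (by norm_num); omega
  nlinarith

lemma inv_lr_ge (hT : 2 ≤ T) (j : Fin (numLR T)) : 8/(T:ℝ) ≤ 1 / lr T j := by
  have hT0 : (0:ℝ) < T := by exact_mod_cast lt_of_lt_of_le (by norm_num) hT
  have h1 : lr T j = 2 ^ ((j:ℕ) + 1) / (16 * T) := rfl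
  rw [h1, one_div_div]
  rw [div_le_div_iff₀ hT0 (by positivity)]
  have h2 : (2:ℝ) ^ ((j:ℕ) + 1) ≤ 2 ^ (numLR T) := by
    apply pow_le_pow_right₀ (by norm_num)
    have := j.2
    omega
  have h3 := pow_le_two_T_sq hT
  nlinarith

lemma inv_lr_le (hT : 2 ≤ T) (j : Fin (numLR T)) : 1 / lr T j ≤ 8*(T:ℝ) := by
  have hT0 : (0:ℝ) < T := by exact_mod_cast lt_of_lt_of_le (by norm_num) hT
  have h0 := lr_pos hT j
  have h1 := lr_ge hT j
  calc 1 / lr T j ≤ 1 / (1/(8*(T:ℝ))) := by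
        apply one_div_le_one_div_of_le (by positivity) h1
    _ = 8*(T:ℝ) := by field_simp

lemma sum_lr_le (hT : 2 ≤ T) : (∑ j, lr T j) ≤ (T:ℝ)/4 := by
  have hT0 : (0:ℝ) < T := by exact_mod_cast lt_of_lt_of_le (by norm_num) hT
  have h1 : (∑ j : Fin (numLR T), lr T j) = (∑ j : Fin (numLR T), (2:ℝ) ^ ((j:ℕ)+1)) / (16*T) := by
    rw [Finset.sum_div]; rfl
  rw [h1, div_le_div_iff₀ (by positivity) (by norm_num)]
  have h2 : (∑ j : Fin (numLR T), (2:ℝ) ^ ((j:ℕ)+1)) ≤ 2 ^ (numLR T + 1) := by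
    have e : (∑ j : Fin (numLR T), (2:ℝ) ^ ((j:ℕ)+1)) = ∑ k ∈ Finset.range (numLR T), (2:ℝ)^(k+1) := by
      rw [Finset.sum_range fun k => (2:ℝ)^(k+1)]
    rw [e]
    have : (∑ k ∈ Finset.range (numLR T), (2:ℝ)^(k+1)) = 2*(2^(numLR T) - 1) := by
      induction (numLR T) with
      | zero => simp
      | succ n ih => rw [Finset.sum_range_succ, ih]; ring
    rw [this, pow_succ]
    nlinarith [pow_pos (show (0:ℝ) < 2 by norm_num) (numLR T)]
  have h3 := pow_le_two_T_sq hT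
  have h4 : (2:ℝ) ^ (numLR T + 1) = 2 * 2 ^ (numLR T) := by rw [pow_succ]; ring
  nlinarith

lemma eps_pos (hK : 1 ≤ K) (hT : 2 ≤ T) : 0 < epsLB K T := by
  unfold epsLB
  have hK0 : (0:ℝ) < K := by exact_mod_cast hK
  have hT0 : (0:ℝ) < T := by exact_mod_cast lt_of_lt_of_le (by norm_num) hT
  have hM0 : (0:ℝ) < numLR T := by exact_mod_cast numLR_pos hT
  positivity

lemma KMeps (hK : 1 ≤ K) (hT : 2 ≤ T) :
    (K:ℝ) * (numLR T) * epsLB K T = 1/(T:ℝ)^3 := by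
  unfold epsLB
  have hK0 : (0:ℝ) < K := by exact_mod_cast hK
  have hT0 : (0:ℝ) < T := by exact_mod_cast lt_of_lt_of_le (by norm_num) hT
  have hM0 : (0:ℝ) < numLR T := by exact_mod_cast numLR_pos hT
  field_simp

end Consts
section Bounds
open OMS
variable {K T : ℕ}

lemma coord_le_one {w : Fin K → Fin (numLR T) → ℝ} (hw : w ∈ simplex2 K T) :
    ∀ i j, w i j ≤ 1 := by
  intro i j
  obtain ⟨hn, hs⟩ := hw
  calc w i j ≤ ∑ j', w i j' :=
        Finset.single_le_sum (fun j' _ => hn i j') (Finset.mem_univ j)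
    _ ≤ ∑ i', ∑ j', w i' j' :=
        Finset.single_le_sum (f := fun i' => ∑ j', w i' j')
          (fun i' _ => Finset.sum_nonneg fun j' _ => hn i' j') (Finset.mem_univ i)
    _ = 1 := hs

lemma sum_lr_sq_le (hT : 2 ≤ T) :
    (∑ j, (lr T j)^2) ≤ (numLR T : ℝ) * ((T:ℝ)/8)^2 := by
  calc (∑ j, (lr T j)^2) ≤ ∑ _j : Fin (numLR T), ((T:ℝ)/8)^2 := by
        apply Finset.sum_le_sum
        intro j _
        have h1 := lr_le hT j
        have h2 := lr_pos hT j
        nlinarith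
    _ = (numLR T : ℝ) * ((T:ℝ)/8)^2 := by
        rw [Finset.sum_const, Finset.card_univ, Fintype.card_fin, nsmul_eq_mul]

lemma sum_lr_sq_pos (hT : 2 ≤ T) : 0 < ∑ j, (lr T j)^2 := by
  apply Finset.sum_pos
  · intro j _
    exact pow_pos (lr_pos hT j) 2
  · rw [Finset.univ_nonempty_iff]
    have := numLR_pos hT
    exact ⟨⟨0, this⟩⟩

lemma w'_one_lower (R : Run K T) (hR : IsRun R) (hK : 1 ≤ K) (hT : 2 ≤ T) :
    ∀ i j, 1/((K:ℝ)*(numLR T)*(T:ℝ)^4) ≤ R.w' 1 i j := by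
  intro i j
  rw [hR.w'_init i j]
  have hK0 : (0:ℝ) < K := by exact_mod_cast hK
  have hT0 : (0:ℝ) < T := by exact_mod_cast lt_of_lt_of_le (by norm_num) hT
  have hM0 : (0:ℝ) < numLR T := by exact_mod_cast numLR_pos hT
  have h1 : 1/(8*(T:ℝ)) ≤ lr T j := lr_ge hT j
  have h2 : (1/(8*(T:ℝ)))^2 ≤ (lr T j)^2 :=
    pow_le_pow_left₀ (by positivity) h1 2
  have h3 := sum_lr_sq_le hT
  have h4 := sum_lr_sq_pos hT
  calc 1/((K:ℝ)*(numLR T)*(T:ℝ)^4) = (1/(8*(T:ℝ)))^2 / ((K:ℝ)*((numLR T : ℝ) * ((T:ℝ)/8)^2)) := by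
        field_simp
    _ ≤ (lr T j)^2 / ((K:ℝ) * ∑ j', (lr T j')^2) := by
        apply div_le_div₀ (sq_nonneg _) h2 (by positivity)
        apply mul_le_mul_of_nonneg_left h3 hK0.le

lemma w'_lower (R : Run K T) (hR : IsRun R) (hK : 1 ≤ K) (hT : 2 ≤ T)
    {t : ℕ} (ht1 : 1 ≤ t) (ht2 : t ≤ T + 1) :
    ∀ i j, 1/((K:ℝ)*(numLR T)*(T:ℝ)^4) ≤ R.w' t i j := by
  have hK0 : (0:ℝ) < K := by exact_mod_cast hK
  have hT0 : (0:ℝ) < T := by exact_mod_cast lt_of_lt_of_le (by norm_num) hT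
  have hM0 : (0:ℝ) < numLR T := by exact_mod_cast numLR_pos hT
  rcases Nat.lt_or_ge t 2 with h2 | h2
  · have : t = 1 := by omega
    rw [this]
    exact w'_one_lower R hR hK hT
  · obtain ⟨s, rfl⟩ : ∃ s, t = s + 1 := ⟨t - 1, by omega⟩
    have hs : s ∈ Finset.Icc 1 T := by
      simp only [Finset.mem_Icc]; omega
    have hmem := hR.w'_mem s hs
    intro i j
    have := mem_decisionSet_eps_le hmem i j
    refine le_trans ?_ this
    unfold epsLB
    apply one_div_le_one_div_of_le (by positivity)
    have hT1 : (1:ℝ) ≤ (T:ℝ) := by exact_mod_cast le_trans (by norm_num) hT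
    have hT4 : (T:ℝ)^3 ≤ (T:ℝ)^4 := by
      apply pow_le_pow_right₀ hT1 (by norm_num)
    have := mul_le_mul_of_nonneg_left hT4 (by positivity : (0:ℝ) ≤ (K:ℝ)*(numLR T))
    calc (K:ℝ) * (numLR T) * (T:ℝ)^3 = (K:ℝ)*(numLR T) * (T:ℝ)^3 := by ring
      _ ≤ (K:ℝ)*(numLR T) * (T:ℝ)^4 := this
      _ = (K:ℝ)*(numLR T)*(T:ℝ)^4 := by ring

lemma w'_pos (R : Run K T) (hR : IsRun R) (hK : 1 ≤ K) (hT : 2 ≤ T)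
    {t : ℕ} (ht1 : 1 ≤ t) (ht2 : t ≤ T + 1) : ∀ i j, 0 < R.w' t i j := by
  intro i j
  have hK0 : (0:ℝ) < K := by exact_mod_cast hK
  have hT0 : (0:ℝ) < T := by exact_mod_cast lt_of_lt_of_le (by norm_num) hT
  have hM0 : (0:ℝ) < numLR T := by exact_mod_cast numLR_pos hT
  have := w'_lower R hR hK hT ht1 ht2 i j
  have hpos : (0:ℝ) < 1/((K:ℝ)*(numLR T)*(T:ℝ)^4) := by positivity
  linarith

lemma w'_le_one (R : Run K T) (hR : IsRun R) (hK : 1 ≤ K) (hT : 2 ≤ T)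
    {t : ℕ} (ht1 : 2 ≤ t) (ht2 : t ≤ T + 1) : ∀ i j, R.w' t i j ≤ 1 := by
  obtain ⟨s, rfl⟩ : ∃ s, t = s + 1 := ⟨t - 1, by omega⟩
  have hs : s ∈ Finset.Icc 1 T := by simp only [Finset.mem_Icc]; omega
  exact coord_le_one (hR.w'_mem s hs).1

lemma logKMT_ge_one (hK : 1 ≤ K) (hT : 2 ≤ T) :
    1 ≤ Real.log ((K:ℝ)*(numLR T)*T) := by
  have hK0 : (1:ℝ) ≤ K := by exact_mod_cast hK
  have hT0 : (2:ℝ) ≤ T := by exact_mod_cast hT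
  have hM0 : (2:ℝ) ≤ numLR T := by exact_mod_cast numLR_ge_two hT
  have h1 : (2:ℝ) ≤ (K:ℝ)*(numLR T) := by nlinarith
  have h4 : (4:ℝ) ≤ (K:ℝ)*(numLR T)*T := by nlinarith
  rw [show (1:ℝ) = Real.log (Real.exp 1) by rw [Real.log_exp]]
  apply Real.log_le_log (Real.exp_pos 1)
  have := Real.exp_one_lt_d9
  linarith

lemma log_ratio_bound (hK : 1 ≤ K) (hT : 2 ≤ T) :
    Real.log ((K:ℝ)*(numLR T)*(T:ℝ)^4) + 2 ≤ 4 * Real.log ((K:ℝ)*(numLR T)*T) := by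
  have hK0 : (1:ℝ) ≤ K := by exact_mod_cast hK
  have hT0 : (2:ℝ) ≤ T := by exact_mod_cast hT
  have hM0 : (2:ℝ) ≤ numLR T := by exact_mod_cast numLR_ge_two hT
  have hKpos : (0:ℝ) < K := by linarith
  have hTpos : (0:ℝ) < T := by linarith
  have hMpos : (0:ℝ) < numLR T := by linarith
  have e1 : Real.log ((K:ℝ)*(numLR T)*(T:ℝ)^4)
      = Real.log K + Real.log (numLR T) + 4 * Real.log T := by
    rw [Real.log_mul (by positivity) (by positivity),
      Real.log_mul (by positivity) (by positivity), Real.log_pow]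
    push_cast; ring
  have e2 : Real.log ((K:ℝ)*(numLR T)*T)
      = Real.log K + Real.log (numLR T) + Real.log T := by
    rw [Real.log_mul (by positivity) (by positivity),
      Real.log_mul (by positivity) (by positivity)]
  rw [e1, e2]
  have hlogK : 0 ≤ Real.log K := Real.log_nonneg hK0
  have hlogM : Real.log 2 ≤ Real.log (numLR T) := Real.log_le_log (by norm_num) hM0
  have hlogT : 0 ≤ Real.log T := Real.log_nonneg (by linarith)
  have hlog2 := Real.log_two_gt_d9
  linarith

end Bounds
section Comparator
open OMS
variable {K T : ℕ}

noncomputable def cmpu (K T : ℕ) (u : Fin K → ℝ) (jstar : Fin (numLR T)) :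
    Fin K → Fin (numLR T) → ℝ :=
  fun i j => epsLB K T +
    (if j = jstar then (1 - (K:ℝ)*(numLR T)*epsLB K T) * u i else 0)

lemma one_sub_KMeps_nonneg (hK : 1 ≤ K) (hT : 2 ≤ T) :
    0 ≤ 1 - (K:ℝ)*(numLR T)*epsLB K T := by
  rw [KMeps hK hT]
  have hT0 : (1:ℝ) ≤ (T:ℝ) := by exact_mod_cast le_trans (by norm_num) hT
  have h1 : (1:ℝ) ≤ (T:ℝ)^3 := one_le_pow₀ hT0
  have h2 : 1/(T:ℝ)^3 ≤ 1 := by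
    rw [div_le_one (by linarith)]; linarith
  linarith

lemma cmpu_row_sum (hK : 1 ≤ K) (hT : 2 ≤ T) (u : Fin K → ℝ) (jstar : Fin (numLR T)) :
    ∀ i, (∑ j, cmpu K T u jstar i j)
      = (numLR T : ℝ) * epsLB K T + (1 - (K:ℝ)*(numLR T)*epsLB K T) * u i := by
  intro i
  unfold cmpu
  rw [Finset.sum_add_distrib, Finset.sum_const, Finset.card_univ, Fintype.card_fin,
    nsmul_eq_mul, Finset.sum_ite_eq' Finset.univ jstar]
  simp

lemma cmpu_nonneg (hK : 1 ≤ K) (hT : 2 ≤ T) {u : Fin K → ℝ} (hu : u ∈ simplex K)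
    (jstar : Fin (numLR T)) : ∀ i j, 0 ≤ cmpu K T u jstar i j := by
  intro i j
  unfold cmpu
  have heps := eps_pos hK hT
  have h1 := one_sub_KMeps_nonneg hK hT
  have h2 := hu.1 i
  by_cases h : j = jstar
  · rw [if_pos h]
    have : 0 ≤ (1 - (K:ℝ)*(numLR T)*epsLB K T) * u i := mul_nonneg h1 h2
    linarith
  · simp only [if_neg h]
    linarith

lemma cmpu_mem {J : Set (Fin (numLR T))} (hK : 1 ≤ K) (hT : 2 ≤ T)
    {u : Fin K → ℝ} (hu : u ∈ simplex K) {jstar : Fin (numLR T)} (hj : jstar ∈ J) :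
    cmpu K T u jstar ∈ decisionSet K T J := by
  have heps := eps_pos hK hT
  have h1 := one_sub_KMeps_nonneg hK hT
  refine ⟨⟨cmpu_nonneg hK hT hu jstar, ?_⟩, fun i j hjJ => ?_, fun i j hjJ => ?_⟩
  · have hrow := cmpu_row_sum hK hT u jstar
    calc (∑ i, ∑ j, cmpu K T u jstar i j)
        = ∑ i, ((numLR T : ℝ) * epsLB K T + (1 - (K:ℝ)*(numLR T)*epsLB K T) * u i) :=
          Finset.sum_congr rfl fun i _ => hrow i
      _ = (K:ℝ) * ((numLR T : ℝ) * epsLB K T)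
          + (1 - (K:ℝ)*(numLR T)*epsLB K T) * (∑ i, u i) := by
          rw [Finset.sum_add_distrib, Finset.sum_const, Finset.card_univ, Fintype.card_fin,
            nsmul_eq_mul, ← Finset.mul_sum]
      _ = 1 := by rw [hu.2]; ring
  · unfold cmpu
    by_cases h : j = jstar
    · rw [if_pos h]
      have : 0 ≤ (1 - (K:ℝ)*(numLR T)*epsLB K T) * u i := mul_nonneg h1 (hu.1 i)
      linarith
    · simp only [if_neg h]; linarith
  · unfold cmpu
    have h : j ≠ jstar := fun he => hjJ (he ▸ hj)
    simp only [if_neg h, add_zero]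

end Comparator
section PerRound
open OMS
variable {K T : ℕ}

lemma r_abs_le_one (R : Run K T) (hR : IsRun R) {t : ℕ} (ht : t ∈ Finset.Icc 1 T) :
    ∀ i, |R.r t i| ≤ 1 := by
  intro i
  have h1 := hR.loss_mem t ht i
  have h2 := hR.pred_mem t ht i
  rw [abs_le]
  unfold Run.r
  constructor <;> [skip; skip] <;>
    · obtain ⟨a1, a2⟩ := h1; obtain ⟨b1, b2⟩ := h2; simp at *; linarith

/-- Core per-round bound on the lifted iterates. -/
lemma per_round_w (R : Run K T) (hR : IsRun R) (hK : 1 ≤ K) (hT : 2 ≤ T)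
    {u : Fin K → ℝ} (hu : u ∈ simplex K) {jstar : Fin (numLR T)}
    {t : ℕ} (ht : t ∈ Finset.Icc 1 T) (hjt : jstar ∈ R.Jset t) :
    (∑ i, ∑ j, R.loss t i * (R.w t i j - cmpu K T u jstar i j))
      ≤ breg K T (cmpu K T u jstar) (R.w' t)
        - breg K T (cmpu K T u jstar) (R.w' (t+1))
        + (∑ j, (R.L (t+1) j - R.L t j))
        + 32 * lr T jstar * (∑ i, u i * (R.r t i)^2)
        + 32*(K:ℝ)*epsLB K T*((T:ℝ)/4) := by
  have heps := eps_pos hK hT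
  have hlr := lr_pos hT
  have hut : cmpu K T u jstar ∈ decisionSet K T (R.Jset t) := cmpu_mem hK hT hu hjt
  have htIcc := Finset.mem_Icc.1 ht
  have hw'pos : ∀ i j, 0 < R.w' t i j :=
    w'_pos R hR hK hT (by omega) (by omega)
  have hround := round_ineq R hR ht hlr heps hut hw'pos
  have hwmem := hR.w_mem t ht
  have hw'mem := hR.w'_mem t ht
  have hwpos : ∀ i j, 0 < R.w t i j :=
    fun i j => lt_of_lt_of_le heps (mem_decisionSet_eps_le hwmem i j)
  have hw'1pos : ∀ i j, 0 < R.w' (t+1) i j :=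
    fun i j => lt_of_lt_of_le heps (mem_decisionSet_eps_le hw'mem i j)
  have hrabs := r_abs_le_one R hR ht
  -- stability bound
  have hstab : (∑ i, ∑ j, (R.r t i + R.corr t i j) * (R.w t i j - R.w' (t+1) i j))
      - breg K T (R.w' (t+1)) (R.w t)
      ≤ ∑ i, ∑ j, ((if 1 < 32 * lr T j * |R.r t i| then R.w t i j * R.r t i else 0)
          + R.corr t i j * R.w t i j) := by
    rw [breg_eq, ← sum2_sub]
    refine sum2_le fun i j => ?_
    have h := coord_stab (hlr j) (hwpos i j) (hw'1pos i j) (hrabs i)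
    have e1 : R.corr t i j = 32*lr T j*(R.r t i)^2 := rfl
    rw [e1]
    calc (R.r t i + 32*lr T j*(R.r t i)^2) * (R.w t i j - R.w' (t+1) i j)
          - 1 / lr T j * (R.w' (t+1) i j * Real.log (R.w' (t+1) i j)
            - R.w' (t+1) i j * Real.log (R.w t i j) - R.w' (t+1) i j + R.w t i j)
        ≤ (if 1 < 32*lr T j*|R.r t i| then R.w t i j * R.r t i else 0)
          + 32*lr T j*(R.w t i j)*(R.r t i)^2 := h
      _ = (if 1 < 32*lr T j*|R.r t i| then R.w t i j * R.r t i else 0)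
          + 32*lr T j*(R.r t i)^2 * R.w t i j := by ring
  -- indicator sum equals penalty increments
  have hdelta : (∑ i, ∑ j,
        (if 1 < 32 * lr T j * |R.r t i| then R.w t i j * R.r t i else 0))
      = ∑ j, (R.L (t+1) j - R.L t j) := by
    rw [Finset.sum_comm]
    refine Finset.sum_congr rfl fun j _ => ?_
    rw [hR.L_upd t ht j]
    ring
  -- bound on the correction against the comparator
  have hr2le1 : ∀ i, (R.r t i)^2 ≤ 1 := by
    intro i
    have := hrabs i
    calc (R.r t i)^2 = |R.r t i|^2 := (sq_abs _).symm
      _ ≤ 1 := by nlinarith [abs_nonneg (R.r t i)]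
  have hcorru : (∑ i, ∑ j, R.corr t i j * cmpu K T u jstar i j)
      ≤ 32 * lr T jstar * (∑ i, u i * (R.r t i)^2) + 32*(K:ℝ)*epsLB K T*((T:ℝ)/4) := by
    have hsplit : (∑ i, ∑ j, R.corr t i j * cmpu K T u jstar i j)
        = (∑ i, ∑ j, R.corr t i j * epsLB K T)
          + ∑ i, ∑ j, (if j = jstar then
              R.corr t i j * ((1 - (K:ℝ)*(numLR T)*epsLB K T) * u i) else 0) := by
      rw [← sum2_add]
      refine sum2_ext fun i j => ?_
      unfold cmpu
      by_cases h : j = jstar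
      · rw [if_pos h, if_pos h]; ring
      · rw [if_neg h, if_neg h]; ring
    rw [hsplit]
    have hb1 : (∑ i, ∑ j, R.corr t i j * epsLB K T) ≤ 32*(K:ℝ)*epsLB K T*((T:ℝ)/4) := by
      have hineq : ∀ i : Fin K, (∑ j, R.corr t i j * epsLB K T)
          ≤ 32*epsLB K T*((T:ℝ)/4) := by
        intro i
        have step1 : (∑ j, R.corr t i j * epsLB K T) ≤ ∑ j, 32*lr T j*epsLB K T := by
          refine Finset.sum_le_sum fun j _ => ?_
          have e1 : R.corr t i j = 32*lr T j*(R.r t i)^2 := rfl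
          rw [e1]
          have hfac : (0:ℝ) ≤ 32*lr T j*epsLB K T :=
            mul_nonneg (mul_nonneg (by norm_num) (hlr j).le) heps.le
          have := mul_le_mul_of_nonneg_left (hr2le1 i) hfac
          nlinarith [this]
        have step2 : (∑ j, 32*lr T j*epsLB K T) = 32*epsLB K T*(∑ j, lr T j) := by
          rw [Finset.mul_sum]
          exact Finset.sum_congr rfl fun j _ => by ring
        rw [step2] at step1
        refine le_trans step1 ?_
        have := sum_lr_le hT
        have h32 : (0:ℝ) ≤ 32*epsLB K T := by positivity
        nlinarith
      calc (∑ i, ∑ j, R.corr t i j * epsLB K T)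
          ≤ ∑ _i : Fin K, 32*epsLB K T*((T:ℝ)/4) := Finset.sum_le_sum fun i _ => hineq i
        _ = (K:ℝ) * (32*epsLB K T*((T:ℝ)/4)) := by
            rw [Finset.sum_const, Finset.card_univ, Fintype.card_fin, nsmul_eq_mul]
        _ = 32*(K:ℝ)*epsLB K T*((T:ℝ)/4) := by ring
    have hb2 : (∑ i, ∑ j, (if j = jstar then
          R.corr t i j * ((1 - (K:ℝ)*(numLR T)*epsLB K T) * u i) else 0))
        ≤ 32 * lr T jstar * (∑ i, u i * (R.r t i)^2) := by
      have e : ∀ i : Fin K, (∑ j, (if j = jstar then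
            R.corr t i j * ((1 - (K:ℝ)*(numLR T)*epsLB K T) * u i) else 0))
          = R.corr t i jstar * ((1 - (K:ℝ)*(numLR T)*epsLB K T) * u i) := by
        intro i
        rw [Finset.sum_ite_eq' Finset.univ jstar]
        simp
      rw [Finset.sum_congr rfl fun i _ => e i, Finset.mul_sum]
      refine Finset.sum_le_sum fun i _ => ?_
      have e1 : R.corr t i jstar = 32*lr T jstar*(R.r t i)^2 := rfl
      rw [e1]
      have h1 := one_sub_KMeps_nonneg hK hT
      have h2 := hu.1 i
      have h3 := sq_nonneg (R.r t i)
      have h4 := (hlr jstar).le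
      have hKM : 0 ≤ (K:ℝ)*(numLR T)*epsLB K T := by
        rw [KMeps hK hT]; positivity
      nlinarith [mul_nonneg (mul_nonneg h4 h3) h2]
    linarith
  -- split the left side of hround
  have hsplit2 : (∑ i, ∑ j, (R.loss t i + R.corr t i j)
        * (R.w t i j - cmpu K T u jstar i j))
      = (∑ i, ∑ j, R.loss t i * (R.w t i j - cmpu K T u jstar i j))
        + ((∑ i, ∑ j, R.corr t i j * R.w t i j)
          - ∑ i, ∑ j, R.corr t i j * cmpu K T u jstar i j) := by
    rw [← sum2_sub, ← sum2_add]
    exact sum2_ext fun i j => by ring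
  have hstabsplit : (∑ i, ∑ j, ((if 1 < 32 * lr T j * |R.r t i| then
        R.w t i j * R.r t i else 0) + R.corr t i j * R.w t i j))
      = (∑ i, ∑ j, (if 1 < 32 * lr T j * |R.r t i| then R.w t i j * R.r t i else 0))
        + ∑ i, ∑ j, R.corr t i j * R.w t i j := sum2_add _ _
  rw [hsplit2] at hround
  rw [hstabsplit, hdelta] at hstab
  linarith
end PerRound
section Conversion
open OMS
variable {K T : ℕ}

lemma conversion (R : Run K T) (hR : IsRun R) (hK : 1 ≤ K) (hT : 2 ≤ T)
    {u : Fin K → ℝ} (hu : u ∈ simplex K) (jstar : Fin (numLR T))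
    {t : ℕ} (ht : t ∈ Finset.Icc 1 T) :
    (∑ i, R.loss t i * (R.p t i - u i))
      ≤ (∑ i, ∑ j, R.loss t i * (R.w t i j - cmpu K T u jstar i j))
        + 2*(K:ℝ)*(numLR T)*epsLB K T := by
  have heps := eps_pos hK hT
  have hwmem := hR.w_mem t ht
  have hwnn : ∀ i j, 0 ≤ R.w t i j := fun i j => (hwmem.1).1 i j
  have hloss0 : ∀ i, 0 ≤ R.loss t i := fun i => (hR.loss_mem t ht i).1
  have hloss1 : ∀ i, R.loss t i ≤ 1 := fun i => (hR.loss_mem t ht i).2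
  set N : Fin K → ℝ := fun i => ∑ j ∈ R.Jfin t, R.w t i j with hN
  set Z : ℝ := ∑ i, N i with hZ
  have hMe : (0:ℝ) ≤ (numLR T : ℝ) * epsLB K T := by
    have : (0:ℝ) < numLR T := by exact_mod_cast numLR_pos hT
    positivity
  have hrow : ∀ i, (∑ j, R.w t i j) - N i ≤ (numLR T : ℝ) * epsLB K T := by
    intro i
    have hsd : (∑ j, R.w t i j) = (∑ j ∈ Finset.univ \ R.Jfin t, R.w t i j) + N i := by
      rw [hN]
      exact (Finset.sum_sdiff (Finset.subset_univ _)).symm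
    have hval : ∀ j ∈ Finset.univ \ R.Jfin t, R.w t i j = epsLB K T := by
      intro j hj
      rw [Finset.mem_sdiff, Run.Jfin, Finset.mem_filter] at hj
      have : j ∉ R.Jset t := by
        intro hmem
        exact hj.2 ⟨Finset.mem_univ j, hmem⟩
      exact hwmem.2.2 i j this
    have : (∑ j ∈ Finset.univ \ R.Jfin t, R.w t i j)
        ≤ (numLR T : ℝ) * epsLB K T := by
      rw [Finset.sum_congr rfl hval, Finset.sum_const, nsmul_eq_mul]
      have hcard : ((Finset.univ \ R.Jfin t).card : ℝ) ≤ (numLR T : ℝ) := by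
        have := Finset.card_le_card (Finset.subset_univ (Finset.univ \ R.Jfin t))
        rw [Finset.card_univ, Fintype.card_fin] at this
        exact_mod_cast this
      nlinarith [heps.le]
    linarith [hsd]
  have hNle : ∀ i, N i ≤ ∑ j, R.w t i j := by
    intro i
    rw [hN]
    exact Finset.sum_le_sum_of_subset_of_nonneg (Finset.subset_univ _)
      (fun j _ _ => hwnn i j)
  have hNnn : ∀ i, 0 ≤ N i := fun i => Finset.sum_nonneg fun j _ => hwnn i j
  have hsum1 : (∑ i, ∑ j, R.w t i j) = 1 := hwmem.1.2
  have hZle1 : Z ≤ 1 := by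
    rw [hZ, ← hsum1]
    exact Finset.sum_le_sum fun i _ => hNle i
  have hZge : 1 - (K:ℝ)*(numLR T)*epsLB K T ≤ Z := by
    have h1 : (∑ i, ((∑ j, R.w t i j) - N i)) ≤ (K:ℝ)*((numLR T : ℝ)*epsLB K T) := by
      calc (∑ i, ((∑ j, R.w t i j) - N i))
          ≤ ∑ _i : Fin K, (numLR T : ℝ)*epsLB K T :=
            Finset.sum_le_sum fun i _ => hrow i
        _ = (K:ℝ)*((numLR T : ℝ)*epsLB K T) := by
            rw [Finset.sum_const, Finset.card_univ, Fintype.card_fin, nsmul_eq_mul]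
    rw [Finset.sum_sub_distrib, hsum1] at h1
    rw [hZ]
    linarith
  have hZpos : 0 < Z := by
    have hKM := KMeps hK hT
    have hT1 : (2:ℝ) ≤ (T:ℝ) := by exact_mod_cast hT
    have h8 : (8:ℝ) ≤ (T:ℝ)^3 := by
      have := pow_le_pow_left₀ (by norm_num : (0:ℝ) ≤ 2) hT1 3
      norm_num at this
      linarith
    have : 1/(T:ℝ)^3 ≤ 1/8 := by
      apply one_div_le_one_div_of_le <;> norm_num <;> linarith
    rw [hKM] at hZge
    linarith
  set A : ℝ := ∑ i, R.loss t i * N i with hA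
  have hA1 : 0 ≤ A := Finset.sum_nonneg fun i _ => mul_nonneg (hloss0 i) (hNnn i)
  have hA2 : A ≤ Z := by
    rw [hA, hZ]
    refine Finset.sum_le_sum fun i _ => ?_
    nlinarith [hloss1 i, hNnn i, hloss0 i]
  have hpe : (∑ i, R.loss t i * R.p t i) = A / Z := by
    rw [hA, Finset.sum_div]
    refine Finset.sum_congr rfl fun i _ => ?_
    rw [hR.p_def t ht i, mul_div_assoc]
  have hdiv : A / Z ≤ A + (1 - Z) := by
    rw [div_le_iff₀ hZpos]
    nlinarith [mul_nonneg (sub_nonneg.2 hA2) (sub_nonneg.2 hZle1)]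
  have hAle : A ≤ ∑ i, ∑ j, R.loss t i * R.w t i j := by
    rw [hA]
    refine Finset.sum_le_sum fun i _ => ?_
    calc R.loss t i * N i ≤ R.loss t i * ∑ j, R.w t i j :=
          mul_le_mul_of_nonneg_left (hNle i) (hloss0 i)
      _ = ∑ j, R.loss t i * R.w t i j := Finset.mul_sum _ _ _
  have hupart : (∑ i, ∑ j, R.loss t i * cmpu K T u jstar i j)
      ≤ (∑ i, R.loss t i * u i) + (K:ℝ)*((numLR T : ℝ)*epsLB K T) := by
    have hrowc := cmpu_row_sum hK hT u jstar
    have e : ∀ i : Fin K, (∑ j, R.loss t i * cmpu K T u jstar i j)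
        = R.loss t i * ((numLR T : ℝ)*epsLB K T + (1 - (K:ℝ)*(numLR T)*epsLB K T) * u i) := by
      intro i
      rw [← Finset.mul_sum, hrowc i]
    rw [Finset.sum_congr rfl fun i _ => e i]
    have hpt : ∀ i : Fin K, R.loss t i * ((numLR T : ℝ)*epsLB K T
          + (1 - (K:ℝ)*(numLR T)*epsLB K T) * u i)
        ≤ (numLR T : ℝ)*epsLB K T + R.loss t i * u i := by
      intro i
      have h1 := hloss0 i
      have h2 := hloss1 i
      have h3 := hu.1 i
      have hKM : 0 ≤ (K:ℝ)*(numLR T)*epsLB K T := by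
        rw [KMeps hK hT]
        positivity
      nlinarith [mul_nonneg h1 h3, mul_nonneg (mul_nonneg h1 h3) hKM]
    calc (∑ i, R.loss t i * ((numLR T : ℝ)*epsLB K T
            + (1 - (K:ℝ)*(numLR T)*epsLB K T) * u i))
        ≤ ∑ i, ((numLR T : ℝ)*epsLB K T + R.loss t i * u i) :=
          Finset.sum_le_sum fun i _ => hpt i
      _ = (K:ℝ)*((numLR T : ℝ)*epsLB K T) + ∑ i, R.loss t i * u i := by
          rw [Finset.sum_add_distrib, Finset.sum_const, Finset.card_univ,
            Fintype.card_fin, nsmul_eq_mul]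
      _ = (∑ i, R.loss t i * u i) + (K:ℝ)*((numLR T : ℝ)*epsLB K T) := by ring
  have hLHS : (∑ i, R.loss t i * (R.p t i - u i))
      = (∑ i, R.loss t i * R.p t i) - ∑ i, R.loss t i * u i := by
    rw [← Finset.sum_sub_distrib]
    exact Finset.sum_congr rfl fun i _ => by ring
  have hRHS : (∑ i, ∑ j, R.loss t i * (R.w t i j - cmpu K T u jstar i j))
      = (∑ i, ∑ j, R.loss t i * R.w t i j)
        - ∑ i, ∑ j, R.loss t i * cmpu K T u jstar i j := by
    rw [← sum2_sub]
    exact sum2_ext fun i j => by ring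
  rw [hLHS, hRHS, hpe]
  have hlast : 1 - Z ≤ (K:ℝ)*(numLR T)*epsLB K T := by linarith
  have : A / Z ≤ (∑ i, ∑ j, R.loss t i * R.w t i j) + (K:ℝ)*(numLR T)*epsLB K T := by
    calc A / Z ≤ A + (1 - Z) := hdiv
      _ ≤ (∑ i, ∑ j, R.loss t i * R.w t i j) + (K:ℝ)*(numLR T)*epsLB K T := by
          linarith
  linarith [hupart, this]

end Conversion
section Interval
open OMS
variable {K T : ℕ}

lemma telescope (F : ℕ → ℝ) (a : ℕ) :
    ∀ b, a ≤ b + 1 → (∑ t ∈ Finset.Icc a b, (F t - F (t+1))) = F a - F (b+1) := by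
  intro b
  induction b with
  | zero =>
    intro h
    interval_cases a
    · simp
    · simp
  | succ n ih =>
    intro h
    rcases Nat.lt_or_ge (n+1) a with hlt | hge
    · have ha : a = n + 2 := by omega
      rw [ha]
      simp
    · rw [Finset.sum_Icc_succ_top (by omega : a ≤ n + 1), ih (by omega)]
      ring

lemma sum_cmpu_weighted (hK : 1 ≤ K) (hT : 2 ≤ T) {u : Fin K → ℝ} (hu : u ∈ simplex K)
    (jstar : Fin (numLR T)) :
    (∑ i, ∑ j, (1 / lr T j) * cmpu K T u jstar i j)
      ≤ 1 / lr T jstar + 8*(T:ℝ)*((K:ℝ)*(numLR T)*epsLB K T) := by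
  have heps := eps_pos hK hT
  have hlr := lr_pos hT
  have hsplit : (∑ i, ∑ j, (1 / lr T j) * cmpu K T u jstar i j)
      = (∑ _i : Fin K, ∑ j, (1 / lr T j) * epsLB K T)
        + ∑ i, ∑ j, (if j = jstar then
            (1/lr T jstar) * ((1 - (K:ℝ)*(numLR T)*epsLB K T) * u i) else 0) := by
    rw [← sum2_add]
    refine sum2_ext fun i j => ?_
    unfold cmpu
    by_cases h : j = jstar
    · rw [if_pos h, if_pos h, h]; ring
    · rw [if_neg h, if_neg h]; ring
  rw [hsplit]
  have hb1 : (∑ _i : Fin K, ∑ j, (1 / lr T j) * epsLB K T)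
      ≤ 8*(T:ℝ)*((K:ℝ)*(numLR T)*epsLB K T) := by
    calc (∑ _i : Fin K, ∑ j, (1 / lr T j) * epsLB K T)
        ≤ ∑ _i : Fin K, ∑ _j : Fin (numLR T), 8*(T:ℝ)*epsLB K T := by
          refine sum2_le fun i j => ?_
          exact mul_le_mul_of_nonneg_right (inv_lr_le hT j) heps.le
      _ = ∑ _i : Fin K, ((numLR T : ℝ) * (8*(T:ℝ)*epsLB K T)) := by
          refine Finset.sum_congr rfl fun i _ => ?_
          rw [Finset.sum_const, Finset.card_univ, Fintype.card_fin, nsmul_eq_mul]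
      _ = (K:ℝ)*((numLR T : ℝ)*(8*(T:ℝ)*epsLB K T)) := by
          rw [Finset.sum_const, Finset.card_univ, Fintype.card_fin, nsmul_eq_mul]
      _ = 8*(T:ℝ)*((K:ℝ)*(numLR T)*epsLB K T) := by ring
  have hb2 : (∑ i, ∑ j, (if j = jstar then
        (1/lr T jstar) * ((1 - (K:ℝ)*(numLR T)*epsLB K T) * u i) else 0))
      ≤ 1 / lr T jstar := by
    have e : ∀ i : Fin K, (∑ j, (if j = jstar then
          (1/lr T jstar) * ((1 - (K:ℝ)*(numLR T)*epsLB K T) * u i) else 0))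
        = (1/lr T jstar) * ((1 - (K:ℝ)*(numLR T)*epsLB K T) * u i) := by
      intro i
      rw [Finset.sum_ite_eq' Finset.univ jstar]
      simp
    rw [Finset.sum_congr rfl fun i _ => e i]
    have hKM : 0 ≤ (K:ℝ)*(numLR T)*epsLB K T := by
      rw [KMeps hK hT]; positivity
    have h1 := one_sub_KMeps_nonneg hK hT
    have hc : 0 < 1/lr T jstar := by have := hlr jstar; positivity
    calc (∑ i, (1/lr T jstar) * ((1 - (K:ℝ)*(numLR T)*epsLB K T) * u i))
        ≤ ∑ i, (1/lr T jstar) * u i := by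
          refine Finset.sum_le_sum fun i _ => ?_
          have h2 := hu.1 i
          nlinarith [mul_nonneg (mul_nonneg hc.le h2) hKM]
      _ = (1/lr T jstar) * ∑ i, u i := (Finset.mul_sum _ _ _).symm
      _ = 1/lr T jstar := by rw [hu.2, mul_one]
  linarith

lemma dterm_bound (R : Run K T) (hR : IsRun R) (hK : 1 ≤ K) (hT : 2 ≤ T)
    {u : Fin K → ℝ} (hu : u ∈ simplex K) (jstar : Fin (numLR T))
    {t₁ t₂ : ℕ} (h1 : 1 ≤ t₁) (h12 : t₁ ≤ t₂) (h2T : t₂ ≤ T) :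
    breg K T (cmpu K T u jstar) (R.w' t₁) - breg K T (cmpu K T u jstar) (R.w' (t₂+1))
      ≤ (∑ j, ((∑ i, R.w' t₁ i j) - ∑ i, R.w' (t₂+1) i j) / lr T j)
        + Real.log ((K:ℝ)*(numLR T)*(T:ℝ)^4)
          * (1 / lr T jstar + 8*(T:ℝ)*((K:ℝ)*(numLR T)*epsLB K T)) := by
  have heps := eps_pos hK hT
  have hlr := lr_pos hT
  have hK0 : (0:ℝ) < K := by exact_mod_cast hK
  have hT0 : (0:ℝ) < T := by exact_mod_cast lt_of_lt_of_le (by norm_num) hT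
  have hM0 : (0:ℝ) < numLR T := by exact_mod_cast numLR_pos hT
  have hK1 : (1:ℝ) ≤ K := by exact_mod_cast hK
  have hT1 : (1:ℝ) ≤ T := by exact_mod_cast le_trans (by norm_num) hT
  have hM1 : (1:ℝ) ≤ numLR T := by
    have := numLR_ge_two hT
    exact_mod_cast le_trans (by norm_num) this
  set x := R.w' t₁ with hx
  set y := R.w' (t₂+1) with hy
  have hxlow : ∀ i j, 1/((K:ℝ)*(numLR T)*(T:ℝ)^4) ≤ x i j :=
    w'_lower R hR hK hT h1 (by omega)
  have hyup : ∀ i j, y i j ≤ 1 := w'_le_one R hR hK hT (by omega) (by omega)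
  have hypos : ∀ i j, 0 < y i j := w'_pos R hR hK hT (by omega) (by omega)
  have hxpos : ∀ i j, 0 < x i j := w'_pos R hR hK hT h1 (by omega)
  set ut := cmpu K T u jstar with hut
  have hutnn := cmpu_nonneg hK hT hu jstar
  set L0 := Real.log ((K:ℝ)*(numLR T)*(T:ℝ)^4) with hL0
  have hL0nn : 0 ≤ L0 := by
    rw [hL0]
    apply Real.log_nonneg
    have h2 : (1:ℝ) ≤ (T:ℝ)^4 := one_le_pow₀ hT1
    have hKM1 : (1:ℝ)*1 ≤ (K:ℝ)*(numLR T) := mul_le_mul hK1 hM1 (by norm_num) (by positivity)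
    have := mul_le_mul hKM1 h2 (by norm_num) (by positivity)
    linarith [this]
  have hsplit : breg K T ut x - breg K T ut y
      = (∑ i, ∑ j, (1 / lr T j) * (ut i j * (Real.log (y i j) - Real.log (x i j))))
        + ∑ i, ∑ j, (1 / lr T j) * (x i j - y i j) := by
    rw [breg_eq, breg_eq, ← sum2_sub, ← sum2_add]
    exact sum2_ext fun i j => by ring
  rw [hsplit]
  have hterm2 : (∑ i, ∑ j, (1 / lr T j) * (x i j - y i j))
      = ∑ j, ((∑ i, x i j) - ∑ i, y i j) / lr T j := by
    rw [Finset.sum_comm]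
    refine Finset.sum_congr rfl fun j _ => ?_
    rw [← Finset.mul_sum, Finset.sum_sub_distrib]
    ring
  have hterm1 : (∑ i, ∑ j, (1 / lr T j) * (ut i j * (Real.log (y i j) - Real.log (x i j))))
      ≤ L0 * (1 / lr T jstar + 8*(T:ℝ)*((K:ℝ)*(numLR T)*epsLB K T)) := by
    have hpt : ∀ i j, (1 / lr T j) * (ut i j * (Real.log (y i j) - Real.log (x i j)))
        ≤ L0 * ((1 / lr T j) * ut i j) := by
      intro i j
      have hly : Real.log (y i j) ≤ 0 := Real.log_nonpos (hypos i j).le (hyup i j)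
      have hlx : -L0 ≤ Real.log (x i j) := by
        have := Real.log_le_log (by positivity) (hxlow i j)
        rw [Real.log_div one_ne_zero (by positivity), Real.log_one] at this
        rw [hL0]
        linarith
      have hdiff : Real.log (y i j) - Real.log (x i j) ≤ L0 := by linarith
      have hc : 0 ≤ 1 / lr T j := by have := hlr j; positivity
      have hu0 := hutnn i j
      calc (1 / lr T j) * (ut i j * (Real.log (y i j) - Real.log (x i j)))
          ≤ (1 / lr T j) * (ut i j * L0) := by
            apply mul_le_mul_of_nonneg_left _ hc
            exact mul_le_mul_of_nonneg_left hdiff hu0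
        _ = L0 * ((1 / lr T j) * ut i j) := by ring
    calc (∑ i, ∑ j, (1 / lr T j) * (ut i j * (Real.log (y i j) - Real.log (x i j))))
        ≤ ∑ i, ∑ j, L0 * ((1 / lr T j) * ut i j) := sum2_le hpt
      _ = L0 * ∑ i, ∑ j, (1 / lr T j) * ut i j := by
          rw [Finset.mul_sum]
          refine Finset.sum_congr rfl fun i _ => ?_
          rw [Finset.mul_sum]
      _ ≤ L0 * (1 / lr T jstar + 8*(T:ℝ)*((K:ℝ)*(numLR T)*epsLB K T)) := by
          apply mul_le_mul_of_nonneg_left _ hL0nn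
          exact sum_cmpu_weighted hK hT hu jstar
  linarith

end Interval

set_option maxHeartbeats 1000000 in
open OMS in
/-- Lemma 1: general interval regret bound for Algorithm 1. -/
theorem interval_regret_bound :
    ∃ C : ℝ, 0 < C ∧
      ∀ (K T : ℕ), 1 ≤ K → 2 ≤ T →
        ∀ (R : OMS.Run K T), OMS.IsRun R →
          ∀ t₁ t₂ : ℕ, 1 ≤ t₁ → t₁ ≤ t₂ → t₂ ≤ T →
            ∀ u ∈ OMS.simplex K,
              ∀ jstar : Fin (OMS.numLR T),
                (∀ t ∈ Finset.Icc t₁ t₂, jstar ∈ R.Jset t) →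
    ∑ t ∈ Finset.Icc t₁ t₂, ∑ i, R.loss t i * (R.p t i - u i) ≤
      4 * Real.log ((K : ℝ) * OMS.numLR T * T) / OMS.lr T jstar
      + 32 * OMS.lr T jstar *
          ∑ t ∈ Finset.Icc t₁ t₂, ∑ i, u i * (R.r t i) ^ 2
      + ∑ j, ((∑ i, R.w' t₁ i j) - ∑ i, R.w' (t₂ + 1) i j) / OMS.lr T j
      + ∑ t ∈ Finset.Icc t₁ t₂, ∑ j, (R.L (t + 1) j - R.L t j)
      + C * Real.log ((K : ℝ) * OMS.numLR T * T) / (T : ℝ) ^ 2 := by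
  refine ⟨100, by norm_num, ?_⟩
  intro K T hK hT R hR t₁ t₂ ht₁ ht₁₂ ht₂T u hu jstar hjs
  have heps := eps_pos hK hT
  have hlr := lr_pos hT
  have hK0 : (0:ℝ) < K := by exact_mod_cast hK
  have hT0 : (0:ℝ) < T := by exact_mod_cast lt_of_lt_of_le (by norm_num) hT
  have hT2 : (2:ℝ) ≤ T := by exact_mod_cast hT
  have hM0 : (0:ℝ) < numLR T := by exact_mod_cast numLR_pos hT
  have hM2 : (2:ℝ) ≤ numLR T := by exact_mod_cast numLR_ge_two hT
  have hK1 : (1:ℝ) ≤ K := by exact_mod_cast hK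
  set B : ℝ := 32*(K:ℝ)*epsLB K T*((T:ℝ)/4) + 2*(K:ℝ)*(numLR T)*epsLB K T with hB
  -- per-round combined bound
  have hcomb : ∀ t ∈ Finset.Icc t₁ t₂,
      (∑ i, R.loss t i * (R.p t i - u i))
        ≤ (breg K T (cmpu K T u jstar) (R.w' t)
            - breg K T (cmpu K T u jstar) (R.w' (t+1)))
          + ((∑ j, (R.L (t+1) j - R.L t j))
            + 32 * lr T jstar * (∑ i, u i * (R.r t i)^2) + B) := by
    intro t htmem
    have htmem' := Finset.mem_Icc.1 htmem
    have htT : t ∈ Finset.Icc 1 T := Finset.mem_Icc.2 (by omega)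
    have h1 := conversion R hR hK hT hu jstar htT
    have h2 := per_round_w R hR hK hT hu htT (hjs t htmem)
    rw [hB]
    linarith
  have hsum := Finset.sum_le_sum hcomb
  -- split the summed right-hand side
  have htel := telescope (fun t => breg K T (cmpu K T u jstar) (R.w' t)) t₁ t₂ (by omega)
  have hsplit : (∑ t ∈ Finset.Icc t₁ t₂,
      ((breg K T (cmpu K T u jstar) (R.w' t)
          - breg K T (cmpu K T u jstar) (R.w' (t+1)))
        + ((∑ j, (R.L (t+1) j - R.L t j))
          + 32 * lr T jstar * (∑ i, u i * (R.r t i)^2) + B)))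
      = (breg K T (cmpu K T u jstar) (R.w' t₁)
          - breg K T (cmpu K T u jstar) (R.w' (t₂+1)))
        + ((∑ t ∈ Finset.Icc t₁ t₂, ∑ j, (R.L (t+1) j - R.L t j))
          + 32 * lr T jstar * (∑ t ∈ Finset.Icc t₁ t₂, ∑ i, u i * (R.r t i)^2)
          + ((Finset.Icc t₁ t₂).card : ℝ) * B) := by
    rw [Finset.sum_add_distrib, htel]
    congr 1
    rw [Finset.sum_add_distrib, Finset.sum_add_distrib, Finset.sum_const,
      nsmul_eq_mul, ← Finset.mul_sum]
  rw [hsplit] at hsum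
  -- bound the Bregman telescoped term
  have hD := dterm_bound R hR hK hT hu jstar ht₁ ht₁₂ ht₂T
  -- arithmetic on the junk terms
  set Lam := Real.log ((K:ℝ)*(numLR T)*(T:ℝ)) with hLam
  have hLam1 : 1 ≤ Lam := logKMT_ge_one hK hT
  have hL0r := log_ratio_bound hK hT
  have hL0nn : 0 ≤ Real.log ((K:ℝ)*(numLR T)*(T:ℝ)^4) := by
    apply Real.log_nonneg
    have h2 : (1:ℝ) ≤ (T:ℝ)^4 := one_le_pow₀ (by linarith)
    have hKM1 : (1:ℝ)*1 ≤ (K:ℝ)*(numLR T) :=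
      mul_le_mul hK1 (by linarith) (by norm_num) (by positivity)
    have := mul_le_mul hKM1 h2 (by norm_num) (by positivity)
    linarith
  have hinv : 8/(T:ℝ) ≤ 1 / lr T jstar := inv_lr_ge hT jstar
  have hinvnn : 0 ≤ 1 / lr T jstar := by have := hlr jstar; positivity
  have he8 : 8*(T:ℝ)*((K:ℝ)*(numLR T)*epsLB K T) = 8/(T:ℝ)^2 := by
    rw [KMeps hK hT]
    field_simp
  have hcard : ((Finset.Icc t₁ t₂).card : ℝ) ≤ (T:ℝ) := by
    rw [Nat.card_Icc]
    have : t₂ + 1 - t₁ ≤ T := by omega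
    exact_mod_cast this
  have hBnn : 0 ≤ B := by
    rw [hB]
    have h1 : 0 ≤ 32*(K:ℝ)*epsLB K T*((T:ℝ)/4) := by positivity
    have h2 : 0 ≤ 2*(K:ℝ)*(numLR T)*epsLB K T := by positivity
    linarith
  have hTB : (T:ℝ) * B ≤ 4/(T:ℝ) + 2/(T:ℝ)^2 := by
    rw [hB]
    have eB1 : (T:ℝ) * (32*(K:ℝ)*epsLB K T*((T:ℝ)/4)) = 8/((numLR T:ℝ)*(T:ℝ)) := by
      unfold epsLB
      field_simp
      ring
    have eB2 : (T:ℝ) * (2*(K:ℝ)*(numLR T)*epsLB K T) = 2/(T:ℝ)^2 := by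
      unfold epsLB
      field_simp
    have h48 : 8/((numLR T:ℝ)*(T:ℝ)) ≤ 4/(T:ℝ) := by
      rw [div_le_div_iff₀ (by positivity) hT0]
      nlinarith
    calc (T:ℝ) * (32*(K:ℝ)*epsLB K T*((T:ℝ)/4) + 2*(K:ℝ)*(numLR T)*epsLB K T)
        = (T:ℝ)*(32*(K:ℝ)*epsLB K T*((T:ℝ)/4))
          + (T:ℝ)*(2*(K:ℝ)*(numLR T)*epsLB K T) := by ring
      _ = 8/((numLR T:ℝ)*(T:ℝ)) + 2/(T:ℝ)^2 := by rw [eB1, eB2]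
      _ ≤ 4/(T:ℝ) + 2/(T:ℝ)^2 := by linarith
  have hcardB : ((Finset.Icc t₁ t₂).card : ℝ) * B ≤ 4/(T:ℝ) + 2/(T:ℝ)^2 :=
    le_trans (mul_le_mul_of_nonneg_right hcard hBnn) hTB
  -- combine
  have hmul1 : Real.log ((K:ℝ)*(numLR T)*(T:ℝ)^4) * (1 / lr T jstar)
      ≤ (4*Lam - 2) * (1 / lr T jstar) :=
    mul_le_mul_of_nonneg_right (by linarith) hinvnn
  have hmul2 : Real.log ((K:ℝ)*(numLR T)*(T:ℝ)^4) * (8/(T:ℝ)^2)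
      ≤ 4*Lam * (8/(T:ℝ)^2) := by
    apply mul_le_mul_of_nonneg_right (by linarith)
    positivity
  have hDist : Real.log ((K:ℝ)*(numLR T)*(T:ℝ)^4)
        * (1 / lr T jstar + 8*(T:ℝ)*((K:ℝ)*(numLR T)*epsLB K T))
      = Real.log ((K:ℝ)*(numLR T)*(T:ℝ)^4) * (1 / lr T jstar)
        + Real.log ((K:ℝ)*(numLR T)*(T:ℝ)^4) * (8/(T:ℝ)^2) := by
    rw [he8]
    ring
  rw [hDist] at hD
  have hfrac : 4 * Lam / lr T jstar = 4*Lam * (1 / lr T jstar) := by ring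
  have hfrac2 : (100:ℝ) * Lam / (T:ℝ)^2 = 100 * Lam * (1/(T:ℝ)^2) := by ring
  have hchain : (2:ℝ)*(8/(T:ℝ)) ≤ 2 * (1 / lr T jstar) :=
    mul_le_mul_of_nonneg_left hinv (by norm_num)
  have hchain' : (16:ℝ)/(T:ℝ) = 2*(8/(T:ℝ)) := by ring
  have hTinv : (0:ℝ) ≤ 1/(T:ℝ) := by positivity
  have hT2inv : (0:ℝ) ≤ 1/(T:ℝ)^2 := by positivity
  have h2L : (2:ℝ)*(1/(T:ℝ)^2) ≤ 2*Lam*(1/(T:ℝ)^2) := by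
    apply mul_le_mul_of_nonneg_right (by linarith)
    positivity
  have hLpos : 0 ≤ Lam*(1/(T:ℝ)^2) := mul_nonneg (by linarith) (by positivity)
  have hgoal8 : (8:ℝ) * (1 / (T:ℝ)^2) = 8/(T:ℝ)^2 := by ring
  have step1 := le_trans hsum (add_le_add_left hD _)
  have step2 : Real.log ((K:ℝ)*(numLR T)*(T:ℝ)^4) * (1 / lr T jstar)
        + Real.log ((K:ℝ)*(numLR T)*(T:ℝ)^4) * (8/(T:ℝ)^2)
        + ((Finset.Icc t₁ t₂).card : ℝ) * B
      ≤ 4 * Lam * (1 / lr T jstar) + 100 * Lam * (1/(T:ℝ)^2) := by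
    have e32 : 4*Lam * (8/(T:ℝ)^2) = 32*Lam*(1/(T:ℝ)^2) := by ring
    have hm2 : Real.log ((K:ℝ)*(numLR T)*(T:ℝ)^4) * (8/(T:ℝ)^2)
        ≤ 32*Lam*(1/(T:ℝ)^2) := by rw [← e32]; exact hmul2
    have hLT2 : 0 ≤ Lam*(1/(T:ℝ)^2) := hLpos
    have hcb : ((Finset.Icc t₁ t₂).card : ℝ) * B ≤ 4*(1/(T:ℝ)) + 2*(1/(T:ℝ)^2) := by
      have e : 4/(T:ℝ) + 2/(T:ℝ)^2 = 4*(1/(T:ℝ)) + 2*(1/(T:ℝ)^2) := by ring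
      linarith [hcardB]
    have hc2 : 4*(1/(T:ℝ)) ≤ 2 * (1 / lr T jstar) := by
      have e : (2:ℝ)*(8/(T:ℝ)) = 16*(1/(T:ℝ)) := by ring
      rw [e] at hchain
      linarith
    have h2L' : 2*(1/(T:ℝ)^2) ≤ 2*Lam*(1/(T:ℝ)^2) := h2L
    nlinarith [hmul1, hm2, hcb, hc2, h2L', hLT2]
  have efin : 4 * Lam / lr T jstar = 4 * Lam * (1 / lr T jstar) := by ring
  have efin2 : 100 * Lam / (T:ℝ)^2 = 100 * Lam * (1/(T:ℝ)^2) := by ring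
  linarith [step1, step2]
end

section
/- (One-step optimistic mirror descent bound, relaxed version of Lemma 15 of Chen et al.) Let 𝒦 ⊂ ℝ^d be a compact convex set, let ψ be a convex function differentiable on an open set containing 𝒦 and a point w′ ∈ ℝ^d (so that D_ψ(x, w′) = ψ(x) − ψ(w′) − ⟨∇ψ(w′), x − w′⟩ is defined for all x ∈ 𝒦), and let ℓ, m ∈ ℝ^d. Suppose w_t minimizes w ↦ ⟨m, w⟩ + D_ψ(w, w′) over 𝒦 and w″ minimizes w ↦ ⟨ℓ, w⟩ + D_ψ(w, w′) over 𝒦. Then for every u ∈ 𝒦: ⟨ℓ, w_t − u⟩ ≤ ⟨w_t − w″, ℓ − m⟩ + D_ψ(u, w′) − D_ψ(u, w″) − D_ψ(w″, w_t) − D_ψ(w_t, w′). In particular, w′ is not required to belong to 𝒦. -/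
/-!
Both iterates are Bregman proximal steps from `w'`. The first-order optimality condition of such a
step `x = argmin_{w ∈ 𝒦} ⟪c, w⟫ + D(w, w')`, rewritten with the three-point identity of the Bregman
divergence, gives `⟪c, x - v⟫ ≤ D(v, w') - D(v, x) - D(x, w')` for every `v ∈ 𝒦`. Applying it to
`w''` with `v = u` and to `wt` with `v = w''` and adding, the `D(w'', w')` terms cancel and what is
left differs from the claim by the identity `⟪ℓ, wt - u⟫ = ⟪ℓ, w'' - u⟫ + ⟪m, wt - w''⟫ + ⟪wt - w'', ℓ - m⟫`.
-/

open InnerProductSpace RealInnerProductSpace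

section Bregman

variable {E : Type*} [NormedAddCommGroup E] [InnerProductSpace ℝ E]

def bregmanDiv (ψ : E → ℝ) (g : E → E) (y x : E) : ℝ :=
  ψ y - ψ x - ⟪g x, y - x⟫

theorem bregmanDiv_three_point (ψ : E → ℝ) (g : E → E) (u x w : E) :
    bregmanDiv ψ g u w - bregmanDiv ψ g u x - bregmanDiv ψ g x w = ⟪g x - g w, u - x⟫ := by
  simp only [bregmanDiv, inner_sub_left, inner_sub_right]
  ring

variable [CompleteSpace E]

theorem IsMinOn.inner_gradient_nonneg {K : Set E} (hK : Convex ℝ K) {F : E → ℝ} {F' x v : E}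
    (hmin : IsMinOn F K x) (hF : HasGradientAt F F' x) (hx : x ∈ K) (hv : v ∈ K) :
    0 ≤ ⟪F', v - x⟫ := by
  have hF' : HasFDerivAt F (toDual ℝ E F') x := hasGradientAt_iff_hasFDerivAt.mp hF
  simpa using hmin.localize.hasFDerivWithinAt_nonneg hF'.hasFDerivWithinAt
    (sub_mem_posTangentConeAt_of_segment_subset (hK.segment_subset hx hv))

theorem hasGradientAt_inner_add_bregmanDiv {ψ : E → ℝ} {g : E → E} {x : E}
    (hψ : HasGradientAt ψ (g x) x) (c w : E) :
    HasGradientAt (fun y => ⟪c, y⟫ + bregmanDiv ψ g y w) (c + (g x - g w)) x := by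
  rw [hasGradientAt_iff_hasFDerivAt] at hψ ⊢
  have hlin : ∀ a : E, HasFDerivAt (fun y : E => ⟪a, y⟫) (toDual ℝ E a) x :=
    fun a => (toDual ℝ E a).hasFDerivAt
  have h := (hlin c).add (((hψ.sub_const (ψ w)).sub ((hlin (g w)).sub_const ⟪g w, w⟫)))
  rw [LinearIsometryEquiv.map_add, LinearIsometryEquiv.map_sub]
  refine h.congr_of_eventuallyEq (.of_forall fun y => ?_)
  simp only [bregmanDiv, Pi.add_apply, Pi.sub_apply, inner_sub_right]

theorem inner_sub_le_bregmanDiv_of_isMinOn {K : Set E} (hK : Convex ℝ K) {ψ : E → ℝ}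
    {g : E → E} {c w x v : E} (hψ : HasGradientAt ψ (g x) x)
    (hmin : IsMinOn (fun y => ⟪c, y⟫ + bregmanDiv ψ g y w) K x) (hx : x ∈ K) (hv : v ∈ K) :
    ⟪c, x - v⟫ ≤ bregmanDiv ψ g v w - bregmanDiv ψ g v x - bregmanDiv ψ g x w := by
  have hopt := hmin.inner_gradient_nonneg hK (hasGradientAt_inner_add_bregmanDiv hψ c w) hx hv
  rw [bregmanDiv_three_point, ← neg_sub v x, inner_neg_right]
  rw [inner_add_left] at hopt
  linarith

end Bregman

theorem optimistic_mirror_descent_one_step_general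
    (d : ℕ) (𝒦 : Set (EuclideanSpace ℝ (Fin d)))
    (hKconvex : Convex ℝ 𝒦)
    (ψ : EuclideanSpace ℝ (Fin d) → ℝ)
    (U : Set (EuclideanSpace ℝ (Fin d))) (hKU : 𝒦 ⊆ U)
    (w' : EuclideanSpace ℝ (Fin d))
    (g : EuclideanSpace ℝ (Fin d) → EuclideanSpace ℝ (Fin d))
    (hg : ∀ x ∈ U, HasGradientAt ψ (g x) x)
    (ℓ m : EuclideanSpace ℝ (Fin d))
    (D : EuclideanSpace ℝ (Fin d) → EuclideanSpace ℝ (Fin d) → ℝ)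
    (hD : ∀ y x, D y x = ψ y - ψ x - ⟪g x, y - x⟫)
    (wt w'' : EuclideanSpace ℝ (Fin d)) (hwt : wt ∈ 𝒦) (hw'' : w'' ∈ 𝒦)
    (hmin₁ : ∀ v ∈ 𝒦, ⟪m, wt⟫ + D wt w' ≤ ⟪m, v⟫ + D v w')
    (hmin₂ : ∀ v ∈ 𝒦, ⟪ℓ, w''⟫ + D w'' w' ≤ ⟪ℓ, v⟫ + D v w')
    (u : EuclideanSpace ℝ (Fin d)) (hu : u ∈ 𝒦) :
    ⟪ℓ, wt - u⟫ ≤ ⟪wt - w'', ℓ - m⟫ + D u w' - D u w'' - D w'' wt - D wt w' := by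
  obtain rfl : D = bregmanDiv ψ g := funext₂ hD
  have hprox₁ := inner_sub_le_bregmanDiv_of_isMinOn hKconvex (hg wt (hKU hwt))
    (isMinOn_iff.mpr hmin₁) hwt hw''
  have hprox₂ := inner_sub_le_bregmanDiv_of_isMinOn hKconvex (hg w'' (hKU hw''))
    (isMinOn_iff.mpr hmin₂) hw'' hu
  have hsplit : ⟪ℓ, wt - u⟫ = ⟪ℓ, w'' - u⟫ + ⟪m, wt - w''⟫ + ⟪wt - w'', ℓ - m⟫ := by
    simp only [inner_sub_left, inner_sub_right, real_inner_comm wt, real_inner_comm w'']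
    ring
  linarith

/-- One-step optimistic mirror descent bound (relaxed version of Lemma 15 of
Chen et al.): `𝒦` is a compact convex set, `ψ` is a convex function with
gradient `g` on an open set `U` containing `𝒦` and the point `w'` (which need
not belong to `𝒦`), and `D` is the associated Bregman divergence.  If `wt`
minimizes `w ↦ ⟨m, w⟩ + D(w, w')` over `𝒦` and `w''` minimizes
`w ↦ ⟨ℓ, w⟩ + D(w, w')` over `𝒦`, then for every `u ∈ 𝒦` the stated one-step
regret inequality holds. -/
theorem optimistic_mirror_descent_one_step
    (d : ℕ) (𝒦 : Set (EuclideanSpace ℝ (Fin d)))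
    (hKcompact : IsCompact 𝒦) (hKconvex : Convex ℝ 𝒦)
    (ψ : EuclideanSpace ℝ (Fin d) → ℝ)
    (hψconvex : ConvexOn ℝ Set.univ ψ)
    (U : Set (EuclideanSpace ℝ (Fin d))) (hUopen : IsOpen U) (hKU : 𝒦 ⊆ U)
    (w' : EuclideanSpace ℝ (Fin d)) (hw'U : w' ∈ U)
    (g : EuclideanSpace ℝ (Fin d) → EuclideanSpace ℝ (Fin d))
    (hg : ∀ x ∈ U, HasGradientAt ψ (g x) x)
    (ℓ m : EuclideanSpace ℝ (Fin d))
    (D : EuclideanSpace ℝ (Fin d) → EuclideanSpace ℝ (Fin d) → ℝ)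
    (hD : ∀ y x, D y x = ψ y - ψ x - ⟪g x, y - x⟫)
    (wt w'' : EuclideanSpace ℝ (Fin d)) (hwt : wt ∈ 𝒦) (hw'' : w'' ∈ 𝒦)
    (hmin₁ : ∀ v ∈ 𝒦, ⟪m, wt⟫ + D wt w' ≤ ⟪m, v⟫ + D v w')
    (hmin₂ : ∀ v ∈ 𝒦, ⟪ℓ, w''⟫ + D w'' w' ≤ ⟪ℓ, v⟫ + D v w')
    (u : EuclideanSpace ℝ (Fin d)) (hu : u ∈ 𝒦) :
    ⟪ℓ, wt - u⟫ ≤ ⟪wt - w'', ℓ - m⟫ + D u w' - D u w'' - D w'' wt - D wt w' :=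
  optimistic_mirror_descent_one_step_general d 𝒦 hKconvex ψ U hKU w' g hg ℓ m D hD wt w'' hwt hw''
    hmin₁ hmin₂ u hu
end

section
/- (Interval decomposition lemma, Lemma 7 of Luo–Schapire.) For any sequence of non-negative real numbers v₁, …, v_T, extended by v₀ = v_{T+1} = 0, there exist N ∈ ℕ, a collection of contiguous intervals U₁, …, U_N ⊆ {1,…,T}, and positive weights a₁, …, a_N such that v_t = Σ_{k=1}^{N} a_k · 1[t ∈ U_k] for every t ∈ {1,…,T}, and Σ_{k=1}^{N} a_k = Σ_{t=1}^{T+1} max(v_t − v_{t−1}, 0). -/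
/-!
Sweep from left to right. Given a decomposition of `v` on `{1, …, T}`, the intervals ending at `T`
carry total weight `v T`. Prolong the fraction `min (v (T + 1)) (v T) / v T` of each of them to
`T + 1` (splitting it in two) and cover the remaining `max (v (T + 1) - v T) 0` by the singleton
`{T + 1}`; the total weight grows by exactly that positive part. Splitting may create intervals of
weight zero, which are discarded at the end.
-/

open Finset

theorem mul_min_div_add_max_sub {x y : ℝ} (hx : 0 ≤ x) (hy : 0 ≤ y) :
    x * (min y x / x) + max (y - x) 0 = y := by
  rcases hx.eq_or_lt with rfl | hx
  · simp [hy]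
  rw [mul_div_cancel₀ _ hx.ne']
  rcases le_total y x with h | h <;> simp [h]

structure WeightedInterval where
  lo : ℕ
  hi : ℕ
  weight : ℝ

namespace WeightedInterval

def eval (I : WeightedInterval) (t : ℕ) : ℝ :=
  I.weight * if t ∈ Icc I.lo I.hi then 1 else 0

def IsNonnegSubinterval (T : ℕ) (I : WeightedInterval) : Prop :=
  0 ≤ I.weight ∧ 1 ≤ I.lo ∧ I.lo ≤ I.hi ∧ I.hi ≤ T

def extend (T : ℕ) (r : ℝ) (I : WeightedInterval) : Multiset WeightedInterval :=
  if I.hi = T then {⟨I.lo, T, (1 - r) * I.weight⟩, ⟨I.lo, T + 1, r * I.weight⟩} else {I}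

variable {T t : ℕ} {r : ℝ} {I : WeightedInterval}

theorem sum_map_extend_of_hi_eq (h : I.hi = T) (f : WeightedInterval → ℝ) :
    ((I.extend T r).map f).sum =
      f ⟨I.lo, T, (1 - r) * I.weight⟩ + f ⟨I.lo, T + 1, r * I.weight⟩ := by
  simp [extend, h]

theorem sum_map_extend_of_hi_ne (h : I.hi ≠ T) (f : WeightedInterval → ℝ) :
    ((I.extend T r).map f).sum = f I := by
  simp [extend, h]

theorem sum_weight_extend : ((I.extend T r).map weight).sum = I.weight := by
  by_cases h : I.hi = T
  · rw [sum_map_extend_of_hi_eq h]; ring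
  · rw [sum_map_extend_of_hi_ne h]

theorem sum_eval_extend_of_le (ht : t ≤ T) :
    ((I.extend T r).map (·.eval t)).sum = I.eval t := by
  by_cases h : I.hi = T
  · rw [sum_map_extend_of_hi_eq h]
    simp only [eval, mem_Icc, h]
    split_ifs <;> first | ring1 | (exfalso; omega)
  · rw [sum_map_extend_of_hi_ne h]

theorem IsNonnegSubinterval.sum_eval_extend_succ (hI : I.IsNonnegSubinterval T) :
    ((I.extend T r).map (·.eval (T + 1))).sum = r * I.eval T := by
  obtain ⟨-, -, hlo, hhi⟩ := hI
  by_cases h : I.hi = T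
  · rw [sum_map_extend_of_hi_eq h]
    simp only [eval, mem_Icc, h]
    split_ifs <;> first | ring1 | (exfalso; omega)
  · rw [sum_map_extend_of_hi_ne h]
    simp only [eval, mem_Icc]
    split_ifs <;> first | ring1 | (exfalso; omega)

theorem IsNonnegSubinterval.of_mem_extend (hI : I.IsNonnegSubinterval T) (hr₀ : 0 ≤ r)
    (hr₁ : r ≤ 1) {J : WeightedInterval} (hJ : J ∈ I.extend T r) :
    J.IsNonnegSubinterval (T + 1) := by
  obtain ⟨hw, hlo, hlohi, hhi⟩ := hI
  unfold extend at hJ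
  split_ifs at hJ with h
  · rcases Multiset.mem_cons.1 hJ with rfl | hJ
    · exact ⟨mul_nonneg (sub_nonneg.2 hr₁) hw, hlo, h ▸ hlohi, T.le_succ⟩
    · rw [Multiset.mem_singleton.1 hJ]
      exact ⟨mul_nonneg hr₀ hw, hlo, (h ▸ hlohi).trans T.le_succ, le_rfl⟩
  · rw [Multiset.mem_singleton.1 hJ]
    exact ⟨hw, hlo, hlohi, by omega⟩

theorem sum_map_filter_pos_weight {D : Multiset WeightedInterval} (hD : ∀ I ∈ D, 0 ≤ I.weight)
    {f : WeightedInterval → ℝ} (hf : ∀ I : WeightedInterval, I.weight = 0 → f I = 0) :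
    ((D.filter (0 < ·.weight)).map f).sum = (D.map f).sum := by
  conv_rhs => rw [← Multiset.filter_add_not (0 < ·.weight) D]
  rw [Multiset.map_add, Multiset.sum_add, left_eq_add]
  refine Multiset.sum_eq_zero fun x hx => ?_
  obtain ⟨I, hI, rfl⟩ := Multiset.mem_map.1 hx
  rw [Multiset.mem_filter] at hI
  exact hf I (le_antisymm (not_lt.1 hI.2) (hD I hI.1))

end WeightedInterval

open WeightedInterval

/-- The case `t = 0` of the second condition says `v 0 = 0`. -/
def IsIntervalDecomposition (T : ℕ) (v : ℕ → ℝ) (D : Multiset WeightedInterval) : Prop :=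
  (∀ I ∈ D, I.IsNonnegSubinterval T) ∧ ∀ t ≤ T, (D.map (·.eval t)).sum = v t

def totalWeight (D : Multiset WeightedInterval) : ℝ := (D.map weight).sum

namespace IsIntervalDecomposition

variable {T : ℕ} {v : ℕ → ℝ} {D : Multiset WeightedInterval}

theorem zero (h0 : v 0 = 0) : IsIntervalDecomposition 0 v 0 :=
  ⟨by simp, fun t ht => by simp [Nat.le_zero.1 ht, h0]⟩

theorem nonneg (hD : IsIntervalDecomposition T v D) {t : ℕ} (ht : t ≤ T) : 0 ≤ v t := by
  rw [← hD.2 t ht]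
  refine Multiset.sum_nonneg fun x hx => ?_
  obtain ⟨I, hI, rfl⟩ := Multiset.mem_map.1 hx
  exact mul_nonneg (hD.1 I hI).1 (by split_ifs <;> norm_num)

theorem exists_succ (hD : IsIntervalDecomposition T v D) (hv : 0 ≤ v (T + 1)) :
    ∃ D', IsIntervalDecomposition (T + 1) v D' ∧
      totalWeight D' = totalWeight D + max (v (T + 1) - v T) 0 := by
  set r := min (v (T + 1)) (v T) / v T
  have hvT := hD.nonneg le_rfl
  have hr₀ : 0 ≤ r := div_nonneg (le_min hv hvT) hvT
  have hr₁ : r ≤ 1 := div_le_one_of_le₀ (min_le_right _ _) hvT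
  refine ⟨D.bind (extend T r) + {⟨T + 1, T + 1, max (v (T + 1) - v T) 0⟩}, ⟨?_, ?_⟩, ?_⟩
  · intro J hJ
    rcases Multiset.mem_add.1 hJ with hJ | hJ
    · obtain ⟨I, hI, hJ⟩ := Multiset.mem_bind.1 hJ
      exact (hD.1 I hI).of_mem_extend hr₀ hr₁ hJ
    · rw [Multiset.mem_singleton.1 hJ]
      exact ⟨le_max_right _ _, T.succ_pos, le_rfl, le_rfl⟩
  · intro t ht
    simp only [Multiset.map_add, Multiset.sum_add, Multiset.map_bind, Multiset.sum_bind]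
    rcases ht.lt_or_eq with ht | rfl
    · rw [Nat.lt_succ_iff] at ht
      rw [Multiset.map_congr rfl fun I _ => sum_eval_extend_of_le ht, hD.2 t ht]
      simp [eval, not_lt.2 ht]
    · rw [Multiset.map_congr rfl fun I hI => (hD.1 I hI).sum_eval_extend_succ,
        Multiset.sum_map_mul_left, hD.2 T le_rfl]
      simpa [eval, mul_comm r] using mul_min_div_add_max_sub hvT hv
  · simp [totalWeight, Multiset.map_bind, Multiset.sum_bind, sum_weight_extend]

theorem filter_weight_pos (hD : IsIntervalDecomposition T v D) :
    IsIntervalDecomposition T v (D.filter (0 < ·.weight)) ∧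
      totalWeight (D.filter (0 < ·.weight)) = totalWeight D := by
  have hw : ∀ I ∈ D, 0 ≤ I.weight := fun I hI => (hD.1 I hI).1
  refine ⟨⟨fun I hI => hD.1 I (Multiset.mem_of_mem_filter hI), fun t ht => ?_⟩, ?_⟩
  · rw [sum_map_filter_pos_weight hw fun I h => by simp [eval, h], hD.2 t ht]
  · exact sum_map_filter_pos_weight hw fun I h => h

end IsIntervalDecomposition

theorem exists_isIntervalDecomposition {T : ℕ} {v : ℕ → ℝ} (hv : ∀ t ∈ Icc 1 T, 0 ≤ v t)
    (h0 : v 0 = 0) : ∃ D, IsIntervalDecomposition T v D ∧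
      totalWeight D = ∑ t ∈ Icc 1 T, max (v t - v (t - 1)) 0 := by
  induction T with
  | zero => exact ⟨0, .zero h0, by simp [totalWeight]⟩
  | succ T ih =>
    obtain ⟨D, hD, hw⟩ := ih fun t ht => hv t (Icc_subset_Icc_right T.le_succ ht)
    obtain ⟨D', hD', hw'⟩ := hD.exists_succ (hv (T + 1) (right_mem_Icc.2 (by omega)))
    exact ⟨D', hD', by rw [hw', hw, sum_Icc_succ_top (by omega), Nat.add_sub_cancel]⟩

theorem List.sum_Icc_map_getD {α M : Type*} [AddCommMonoid M] (L : List α) (d : α) (f : α → M) :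
    ∑ k ∈ Icc 1 L.length, f (L.getD (k - 1) d) = (L.map f).sum := by
  rw [← Fin.sum_univ_fun_getElem]
  simp_rw [← List.getD_eq_getElem L d]
  rw [Fin.sum_univ_eq_sum_range (fun i => f (L.getD i d)), range_eq_Ico,
    ← Ico_add_one_right_eq_Icc, ← sum_Ico_add' _ 0 L.length 1]
  simp

theorem Multiset.exists_Icc_enumeration {α M : Type*} [AddCommMonoid M] (D : Multiset α)
    (d : α) : ∃ (N : ℕ) (I : ℕ → α), (∀ k ∈ Finset.Icc 1 N, I k ∈ D) ∧
      ∀ f : α → M, ∑ k ∈ Finset.Icc 1 N, f (I k) = (D.map f).sum := by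
  refine ⟨D.toList.length, fun k => D.toList.getD (k - 1) d, fun k hk => ?_, fun f => ?_⟩
  · rw [Finset.mem_Icc] at hk
    dsimp only
    rw [← mem_toList, List.getD_eq_getElem _ _ (by omega)]
    exact List.getElem_mem _
  · rw [List.sum_Icc_map_getD, ← Multiset.sum_coe, ← Multiset.map_coe, Multiset.coe_toList]

/-- Interval decomposition lemma (Lemma 7 of Luo–Schapire): any sequence of
non-negative numbers `v₁, …, v_T` (with `v₀ = v_{T+1} = 0`) is a positive
linear combination of indicators of contiguous intervals `U_k = {s_k, …, e_k}`
of `{1,…,T}`, and the total weight equals the sum of the positive parts of the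
increments. -/
theorem interval_decomposition (T : ℕ) (v : ℕ → ℝ)
    (hv : ∀ t ∈ Finset.Icc 1 T, 0 ≤ v t) (h0 : v 0 = 0) (hT1 : v (T + 1) = 0) :
    ∃ (N : ℕ) (s e : ℕ → ℕ) (a : ℕ → ℝ),
      (∀ k ∈ Finset.Icc 1 N, 0 < a k ∧ 1 ≤ s k ∧ s k ≤ e k ∧ e k ≤ T) ∧
      (∀ t ∈ Finset.Icc 1 T,
        v t = ∑ k ∈ Finset.Icc 1 N,
          a k * (if t ∈ Finset.Icc (s k) (e k) then (1 : ℝ) else 0)) ∧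
      ∑ k ∈ Finset.Icc 1 N, a k =
        ∑ t ∈ Finset.Icc 1 (T + 1), max (v t - v (t - 1)) 0 := by
  obtain ⟨D, hD, hw⟩ := exists_isIntervalDecomposition hv h0
  obtain ⟨hP, hwP⟩ := hD.filter_weight_pos
  obtain ⟨N, I, hmem, hsum⟩ :=
    (D.filter (0 < ·.weight)).exists_Icc_enumeration (M := ℝ) ⟨0, 0, 0⟩
  refine ⟨N, fun k => (I k).lo, fun k => (I k).hi, fun k => (I k).weight,
    fun k hk => ?_, fun t ht => ?_, ?_⟩
  · obtain ⟨-, hlo, hlohi, hhi⟩ := hP.1 _ (hmem k hk)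
    exact ⟨(Multiset.mem_filter.1 (hmem k hk)).2, hlo, hlohi, hhi⟩
  · exact ((hsum (·.eval t)).trans (hP.2 t (mem_Icc.1 ht).2)).symm
  · rw [hsum, sum_Icc_succ_top (by omega), Nat.add_sub_cancel, hT1, zero_sub,
      max_eq_right (neg_nonpos.2 (hD.nonneg le_rfl)), add_zero]
    exact hwP.trans hw
end

section
/- (Per-coordinate bound in the small-learning-rate regime.) Let η > 0, w ≥ 0, and r ∈ ℝ satisfy 32·η·|r| ≤ 1, and set v = r + 32·η·r². Then (w/η)·( η·v − 1 + exp(−η·v) ) ≤ 4·η·w·r². -/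
/-! With `x = η v`, the bracket is the Bregman-type remainder `x - 1 + exp (-x)`, which is at most
`x²` once `|x| ≤ 1`. The hypothesis `32 η |r| ≤ 1` makes the correction term at most `|r|`, so
`|v| ≤ 2 |r|`; this gives `|η v| ≤ 1` and `(w / η) (η v)² = η w v² ≤ 4 η w r²`. -/

open Real

theorem sub_one_add_exp_neg_le_sq {x : ℝ} (hx : |x| ≤ 1) : x - 1 + exp (-x) ≤ x ^ 2 := by
  have h := (abs_le.mp (abs_exp_sub_one_sub_id_le (x := -x) (by rwa [abs_neg]))).2
  rw [neg_sq] at h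
  linarith

theorem abs_add_mul_sq_le_two_mul_abs {c r : ℝ} (hc : 0 ≤ c) (h : c * |r| ≤ 1) :
    |r + c * r ^ 2| ≤ 2 * |r| :=
  calc |r + c * r ^ 2| ≤ |r| + |c * r ^ 2| := abs_add_le r (c * r ^ 2)
    _ = |r| + c * r ^ 2 := by rw [abs_of_nonneg (by positivity : 0 ≤ c * r ^ 2)]
    _ = |r| + (c * |r|) * |r| := by rw [← sq_abs r]; ring
    _ ≤ 2 * |r| := by nlinarith [abs_nonneg r]

/-- Per-coordinate bound in the small-learning-rate regime: if
`32·η·|r| ≤ 1` and `v = r + 32·η·r²`, then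
`(w/η)·(η·v − 1 + exp(−η·v)) ≤ 4·η·w·r²`. -/
theorem small_lr_coordinate_bound (η w r : ℝ) (hη : 0 < η) (hw : 0 ≤ w)
    (hsmall : 32 * η * |r| ≤ 1) (v : ℝ) (hv : v = r + 32 * η * r ^ 2) :
    (w / η) * (η * v - 1 + Real.exp (-(η * v))) ≤ 4 * η * w * r ^ 2 := by
  have hv_abs : |v| ≤ 2 * |r| := hv ▸ abs_add_mul_sq_le_two_mul_abs (by positivity) hsmall
  have hηv : |η * v| ≤ 1 := by
    rw [abs_mul, abs_of_pos hη]
    nlinarith [abs_nonneg v]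
  calc (w / η) * (η * v - 1 + exp (-(η * v))) ≤ (w / η) * (η * v) ^ 2 :=
        mul_le_mul_of_nonneg_left (sub_one_add_exp_neg_le_sq hηv) (by positivity)
    _ = η * w * |v| ^ 2 := by rw [sq_abs]; field_simp
    _ ≤ η * w * (2 * |r|) ^ 2 := by gcongr
    _ = 4 * η * w * r ^ 2 := by rw [mul_pow, sq_abs]; ring
end

section
/- (Boundedness of the cumulative penalty.) In every run of Algorithm 1, for every learning-rate index j ∈ [M] one has L_{T+1}(j) ≤ 2 + K·T·ε ≤ 2 + 1/(M·T²); consequently Σ_{j∈[M]} L_{T+1}(j) ≤ 2M + 1. -/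
open Finset

/-! The penalty of `j` only grows by `∑ᵢ w_t(i,j) r_t(i)` over experts with a large error, and
`|r_t(i)| ≤ 1`. While `j` is active its column `w_t(·,j)` has mass at most `1`, so a step starting
from `L_t(j) ≤ 1` ends at most at `2`; once `j` is inactive its column is pinned at `ε`, so a step
adds at most `Kε`. Hence `L_{t+1}(j) ≤ max (L_t(j) + Kε) 2`, and by induction
`L_{t+1}(j) ≤ 2 + Ktε`. -/

namespace OMS

variable {K T : ℕ}

lemma epsLB_nonneg (K T : ℕ) : 0 ≤ epsLB K T := by
  unfold epsLB; positivity

lemma natCast_mul_mul_epsLB_le (K T : ℕ) :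
    (K : ℝ) * T * epsLB K T ≤ 1 / ((numLR T : ℝ) * (T : ℝ) ^ 2) := by
  rcases eq_or_ne K 0 with rfl | hK
  · simp only [Nat.cast_zero, zero_mul]; positivity
  rcases eq_or_ne T 0 with rfl | hT
  · simp only [Nat.cast_zero, mul_zero, zero_mul]; positivity
  apply le_of_eq
  unfold epsLB
  field_simp

lemma natCast_mul_one_div_mul_sq_le_one (M T : ℕ) :
    (M : ℝ) * (1 / ((M : ℝ) * (T : ℝ) ^ 2)) ≤ 1 := by
  rcases eq_or_ne M 0 with rfl | hM
  · simp
  rcases eq_or_ne T 0 with rfl | hT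
  · simp
  have hT1 : (1 : ℝ) ≤ (T : ℝ) ^ 2 :=
    one_le_pow₀ (Nat.one_le_cast.mpr (Nat.one_le_iff_ne_zero.mpr hT))
  calc (M : ℝ) * (1 / ((M : ℝ) * (T : ℝ) ^ 2)) = 1 / (T : ℝ) ^ 2 := by field_simp
    _ ≤ 1 := div_le_one_of_le₀ hT1 (by positivity)

lemma sum_apply_le_one_of_mem_simplex2 {w : Fin K → Fin (numLR T) → ℝ}
    (hw : w ∈ simplex2 K T) (j : Fin (numLR T)) : ∑ i, w i j ≤ 1 := by
  obtain ⟨hnonneg, hsum⟩ := hw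
  calc ∑ i, w i j ≤ ∑ i, ∑ j', w i j' :=
        sum_le_sum fun i _ => single_le_sum (fun j' _ => hnonneg i j') (mem_univ j)
    _ = 1 := hsum

lemma ite_mul_le_of_abs_le_one {P : Prop} [Decidable P] {w r : ℝ} (hw : 0 ≤ w)
    (hr : |r| ≤ 1) : (if P then w * r else 0) ≤ w := by
  split_ifs
  · calc w * r ≤ w * 1 := mul_le_mul_of_nonneg_left ((le_abs_self r).trans hr) hw
      _ = w := mul_one w
  · exact hw

namespace IsRun

variable {R : Run K T} (hR : IsRun R) {t : ℕ} (ht : t ∈ Icc 1 T)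
include hR ht

lemma abs_r_le_one (i : Fin K) : |R.r t i| ≤ 1 := by
  obtain ⟨hl₀, hl₁⟩ := hR.loss_mem t ht i
  obtain ⟨hm₀, hm₁⟩ := hR.pred_mem t ht i
  exact abs_sub_le_of_nonneg_of_le hl₀ hl₁ hm₀ hm₁

lemma L_succ_le_add_sum_w (j : Fin (numLR T)) :
    R.L (t + 1) j ≤ R.L t j + ∑ i, R.w t i j := by
  rw [hR.L_upd t ht j]
  gcongr with i
  exact ite_mul_le_of_abs_le_one ((hR.w_mem t ht).1.1 i j) (hR.abs_r_le_one ht i)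

lemma L_succ_le_max (j : Fin (numLR T)) :
    R.L (t + 1) j ≤ max (R.L t j + K * epsLB K T) 2 := by
  have hstep := hR.L_succ_le_add_sum_w ht j
  by_cases hj : R.L t j ≤ 1
  · have := sum_apply_le_one_of_mem_simplex2 (hR.w_mem t ht).1 j
    exact le_max_of_le_right (by linarith)
  · have hcol : ∑ i, R.w t i j = K * epsLB K T := by
      simp [(hR.w_mem t ht).2.2 _ j hj]
    exact le_max_of_le_left (hcol ▸ hstep)

end IsRun

lemma IsRun.L_succ_le_two_add {R : Run K T} (hR : IsRun R) {t : ℕ} (ht : t ≤ T)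
    (j : Fin (numLR T)) :
    R.L (t + 1) j ≤ 2 + K * t * epsLB K T := by
  induction t with
  | zero => simp [hR.L_init j]
  | succ t ih =>
    have hKε : 0 ≤ (K : ℝ) * epsLB K T :=
      mul_nonneg (Nat.cast_nonneg K) (epsLB_nonneg K T)
    refine (hR.L_succ_le_max (mem_Icc.mpr ⟨by omega, ht⟩) j).trans (max_le ?_ ?_)
    · push_cast
      linarith [ih (by omega)]
    · push_cast
      nlinarith

end OMS

open OMS in
theorem cumulative_penalty_bound_general (K T : ℕ)
    (R : OMS.Run K T) (hR : OMS.IsRun R) :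
    (∀ j : Fin (OMS.numLR T),
      R.L (T + 1) j ≤ 2 + (K : ℝ) * T * OMS.epsLB K T ∧
      2 + (K : ℝ) * T * OMS.epsLB K T ≤ 2 + 1 / ((OMS.numLR T : ℝ) * (T : ℝ) ^ 2)) ∧
    ∑ j, R.L (T + 1) j ≤ 2 * (OMS.numLR T : ℝ) + 1 := by
  set δ : ℝ := 1 / ((numLR T : ℝ) * (T : ℝ) ^ 2)
  have hε := natCast_mul_mul_epsLB_le K T
  have hL : ∀ j, R.L (T + 1) j ≤ 2 + δ :=
    fun j => (hR.L_succ_le_two_add le_rfl j).trans (by linarith)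
  refine ⟨fun j => ⟨hR.L_succ_le_two_add le_rfl j, by linarith⟩, ?_⟩
  calc ∑ j, R.L (T + 1) j ≤ ∑ _j : Fin (numLR T), (2 + δ) := sum_le_sum fun j _ => hL j
    _ = 2 * numLR T + numLR T * δ := by
        simp only [sum_const, card_univ, Fintype.card_fin, nsmul_eq_mul]; ring
    _ ≤ 2 * numLR T + 1 := by linarith [natCast_mul_one_div_mul_sq_le_one (numLR T) T]

open OMS in
/-- Boundedness of the cumulative penalty in Algorithm 1. -/
theorem cumulative_penalty_bound (K T : ℕ) (hK : 1 ≤ K) (hT : 2 ≤ T)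
    (R : OMS.Run K T) (hR : OMS.IsRun R) :
    (∀ j : Fin (OMS.numLR T),
      R.L (T + 1) j ≤ 2 + (K : ℝ) * T * OMS.epsLB K T ∧
      2 + (K : ℝ) * T * OMS.epsLB K T ≤ 2 + 1 / ((OMS.numLR T : ℝ) * (T : ℝ) ^ 2)) ∧
    ∑ j, R.L (T + 1) j ≤ 2 * (OMS.numLR T : ℝ) + 1 :=
  cumulative_penalty_bound_general K T R hR
end

section
/- (KKT form of the truncated entropic mirror descent update.) Let K, M ≥ 1, let w′ ∈ ℝ^{K×M} have all entries strictly positive, let m̃ ∈ ℝ^{K×M} with m̃(i,j) = m(i) for some m ∈ ℝ^K, let η(1),…,η(M) > 0, let ε > 0 with K·M·ε < 1, and let ψ(w) = Σ_{i,j} (1/η(j)) w(i,j) log w(i,j) with Bregman divergence D_ψ. Let w be a minimizer of w ↦ ⟨m̃, w⟩ + D_ψ(w, w′) over Ω = { w ∈ Δ_{K×M} : w(i,j) ≥ ε for all i, j }. Then there exist λ ∈ ℝ and μ ∈ ℝ^{K×M} with μ(i,j) ≥ 0 such that for all (i,j): w(i,j) = w′(i,j)·exp( η(j)·( −m(i)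 + λ + μ(i,j) ) ), and μ(i,j) = 0 whenever w(i,j) > ε. -/
/-!
The objective `⟨m̃, v⟩ + D_ψ(v, w′)` is separable: it is `∑ φ_{ij}(v_{ij})` up to a constant, with
`φ_{ij}'(x) = m(i) + (log x − log w′(i,j)) / η(j)`. At a minimiser `w`, shifting mass from a
coordinate strictly above the floor `ε` to any other coordinate is a feasible direction, so the
first-order condition shows that every such coordinate attains the least value `λ` of the
`φ_{ij}'(w_{ij})`. Setting `μ(i,j) = φ_{ij}'(w_{ij}) − λ ≥ 0` and exponentiating gives the update.
-/

open Real Finset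

theorem IsMinOn.hasFDerivWithinAt_sub_nonneg {E : Type*} [NormedAddCommGroup E]
    [NormedSpace ℝ E] {F : E → ℝ} {F' : E →L[ℝ] ℝ} {s : Set E} {w v : E}
    (hmin : IsMinOn F s w) (hs : Convex ℝ s) (hw : w ∈ s) (hv : v ∈ s)
    (hF : HasFDerivWithinAt F F' s w) : 0 ≤ F' (v - w) :=
  hmin.localize.hasFDerivWithinAt_nonneg hF
    (sub_mem_posTangentConeAt_of_segment_subset (hs.segment_subset hw hv))

theorem hasDerivAt_linear_add_bregman_mul_log {x : ℝ} (hx : x ≠ 0) (a s y : ℝ) :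
    HasDerivAt (fun x ↦ a * x + s * (x * log x) - s * (log y + 1) * (x - y))
      (a + s * (log x - log y)) x :=
  ((((hasDerivAt_id x).const_mul a).add ((hasDerivAt_mul_log hx).const_mul s)).sub
    (((hasDerivAt_id x).sub_const y).const_mul (s * (log y + 1)))).congr_deriv (by ring)

section TruncatedSimplex

variable {ι : Type*} [Fintype ι]

theorem hasFDerivAt_sum_comp_apply {φ : ι → ℝ → ℝ} {φ' : ι → ℝ} {w : ι → ℝ}
    (hφ : ∀ p, HasDerivAt (φ p) (φ' p) (w p)) :
    HasFDerivAt (fun v : ι → ℝ ↦ ∑ p, φ p (v p))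
      (∑ p, φ' p • ContinuousLinearMap.proj (R := ℝ) (φ := fun _ : ι ↦ ℝ) p) w :=
  HasFDerivAt.fun_sum fun p _ ↦ (hφ p).comp_hasFDerivAt w (hasFDerivAt_apply p w)

def truncatedSimplex (ε c : ℝ) : Set (ι → ℝ) :=
  {v | (∀ p, ε ≤ v p) ∧ ∑ p, v p = c}

theorem convex_truncatedSimplex (ε c : ℝ) : Convex ℝ (truncatedSimplex (ι := ι) ε c) := by
  rintro x ⟨hxε, hx⟩ y ⟨hyε, hy⟩ a b ha hb hab
  refine ⟨fun p ↦ ?_, ?_⟩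
  · simp only [Pi.add_apply, Pi.smul_apply, smul_eq_mul]
    calc ε = a * ε + b * ε := by rw [← add_mul, hab, one_mul]
      _ ≤ a * x p + b * y p := by gcongr; exacts [hxε p, hyε p]
  · simp only [Pi.add_apply, Pi.smul_apply, smul_eq_mul, sum_add_distrib, ← mul_sum, hx, hy]
    rw [← add_mul, hab, one_mul]

theorem add_smul_single_sub_single_mem_truncatedSimplex [DecidableEq ι] {ε c : ℝ}
    {w : ι → ℝ} (hw : w ∈ truncatedSimplex ε c) {a : ι} (b : ι) {t : ℝ} (ht₀ : 0 ≤ t)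
    (ht : t ≤ w a - ε) :
    w + t • (Pi.single b 1 - Pi.single a 1) ∈ truncatedSimplex ε c := by
  obtain ⟨hwε, hw⟩ := hw
  refine ⟨fun p ↦ ?_, ?_⟩
  · rcases eq_or_ne p a with rfl | hpa <;> rcases eq_or_ne p b with rfl | hpb <;>
      simp [*] <;> linarith [hwε p]
  · simp [sum_add_distrib, hw, sum_sub_distrib, ← mul_sum]

theorem deriv_le_of_isMinOn_truncatedSimplex {φ : ι → ℝ → ℝ} {φ' : ι → ℝ} {ε c : ℝ}
    {w : ι → ℝ} (hmin : IsMinOn (fun v : ι → ℝ ↦ ∑ p, φ p (v p)) (truncatedSimplex ε c) w)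
    (hw : w ∈ truncatedSimplex ε c) (hφ : ∀ p, HasDerivAt (φ p) (φ' p) (w p))
    {a : ι} (ha : ε < w a) (b : ι) : φ' a ≤ φ' b := by
  classical
  have key := hmin.hasFDerivWithinAt_sub_nonneg (convex_truncatedSimplex ε c) hw
    (add_smul_single_sub_single_mem_truncatedSimplex hw b (sub_pos.2 ha).le le_rfl)
    (hasFDerivAt_sum_comp_apply hφ).hasFDerivWithinAt
  simp only [add_sub_cancel_left, map_smul, _root_.sum_apply, smul_apply,
    ContinuousLinearMap.proj_apply, Pi.sub_apply, Pi.single_apply, smul_eq_mul, mul_sub, mul_ite,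
    mul_one, mul_zero, sum_sub_distrib, sum_ite_eq', mem_univ, ↓reduceIte, sub_nonneg] at key
  exact le_of_mul_le_mul_left key (sub_pos.2 ha)

theorem exists_multipliers_of_forall_le {g w : ι → ℝ} {ε : ℝ}
    (hg : ∀ a, ε < w a → ∀ b, g a ≤ g b) :
    ∃ (lam : ℝ) (μ : ι → ℝ), (∀ p, 0 ≤ μ p) ∧ (∀ p, g p = lam + μ p) ∧
      (∀ p, ε < w p → μ p = 0) := by
  have hbdd : BddBelow (Set.range g) := (Set.finite_range g).bddBelow
  refine ⟨⨅ p, g p, fun p ↦ g p - ⨅ p, g p, fun p ↦ sub_nonneg.2 (ciInf_le hbdd p),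
    fun p ↦ by ring, fun p hp ↦ ?_⟩
  have : Nonempty ι := ⟨p⟩
  exact sub_eq_zero.2 (le_antisymm (le_ciInf (hg p hp)) (ciInf_le hbdd p))

theorem uncurry_mem_truncatedSimplex_iff {κ : Type*} [Fintype κ] {ε c : ℝ}
    {u : ι → κ → ℝ} :
    Function.uncurry u ∈ truncatedSimplex ε c ↔ (∀ i j, ε ≤ u i j) ∧ ∑ i, ∑ j, u i j = c := by
  simp [truncatedSimplex, Fintype.sum_prod_type, Prod.forall]

end TruncatedSimplex

theorem kkt_truncated_entropic_update_general (K M : ℕ)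
    (w' : Fin K → Fin M → ℝ) (hw' : ∀ i j, 0 < w' i j)
    (m : Fin K → ℝ) (mt : Fin K → Fin M → ℝ) (hmt : ∀ i j, mt i j = m i)
    (η : Fin M → ℝ) (hη : ∀ j, 0 < η j)
    (ε : ℝ) (hε : 0 < ε)
    (ψ : (Fin K → Fin M → ℝ) → ℝ)
    (hψ : ∀ w, ψ w = ∑ i, ∑ j, (1 / η j) * w i j * Real.log (w i j))
    (D : (Fin K → Fin M → ℝ) → (Fin K → Fin M → ℝ) → ℝ)
    (hD : ∀ y x, D y x = ψ y - ψ x -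
      ∑ i, ∑ j, (1 / η j) * (Real.log (x i j) + 1) * (y i j - x i j))
    (Ω : Set (Fin K → Fin M → ℝ))
    (hΩ : Ω = {w | (∀ i j, ε ≤ w i j) ∧ ∑ i, ∑ j, w i j = 1})
    (w : Fin K → Fin M → ℝ) (hwΩ : w ∈ Ω)
    (hwmin : ∀ v ∈ Ω,
      (∑ i, ∑ j, mt i j * w i j) + D w w' ≤
      (∑ i, ∑ j, mt i j * v i j) + D v w') :
    ∃ (lam : ℝ) (μ : Fin K → Fin M → ℝ),
      (∀ i j, 0 ≤ μ i j) ∧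
      (∀ i j, w i j = w' i j * Real.exp (η j * (-m i + lam + μ i j))) ∧
      (∀ i j, ε < w i j → μ i j = 0) := by
  subst hΩ
  set φ : Fin K × Fin M → ℝ → ℝ := fun p x ↦ mt p.1 p.2 * x + 1 / η p.2 * (x * log x) -
    1 / η p.2 * (log (w' p.1 p.2) + 1) * (x - w' p.1 p.2)
  have hobj : ∀ u, (∑ i, ∑ j, mt i j * u i j) + D u w' =
      ∑ p, φ p (Function.uncurry u p) - ψ w' := fun u ↦ by
    rw [Fintype.sum_prod_type]
    simp only [hD, hψ u, φ, Function.uncurry_apply_pair, sum_add_distrib, sum_sub_distrib, mul_assoc]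
    ring
  have hw : Function.uncurry w ∈ truncatedSimplex ε 1 :=
    uncurry_mem_truncatedSimplex_iff.2 hwΩ
  have hmin : IsMinOn (fun v ↦ ∑ p, φ p (v p)) (truncatedSimplex ε 1) (Function.uncurry w) := by
    intro v hv
    have := hwmin _ (uncurry_mem_truncatedSimplex_iff.1 (by rwa [Function.uncurry_curry]))
    rwa [hobj, hobj, Function.uncurry_curry, sub_le_sub_iff_right] at this
  have hpos : ∀ i j, 0 < w i j := fun i j ↦ hε.trans_le (hw.1 (i, j))
  obtain ⟨lam, μ, hμ, hg, hslack⟩ := exists_multipliers_of_forall_le fun a ha b ↦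
    deriv_le_of_isMinOn_truncatedSimplex hmin hw
      (fun p ↦ hasDerivAt_linear_add_bregman_mul_log (hpos p.1 p.2).ne' _ _ _) ha b
  refine ⟨lam, Function.curry μ, fun i j ↦ hμ (i, j), fun i j ↦ ?_, fun i j ↦ hslack (i, j)⟩
  have hexp : η j * (-m i + lam + μ (i, j)) = log (w i j) - log (w' i j) := by
    rw [add_assoc, ← hg (i, j), hmt]
    field_simp [(hη j).ne']
    ring
  rw [Function.curry_apply, hexp, exp_sub, exp_log (hpos i j), exp_log (hw' i j),
    mul_div_cancel₀ _ (hw' i j).ne']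

/-- KKT form of the truncated entropic mirror descent update: any minimizer of
`w ↦ ⟨m̃, w⟩ + D_ψ(w, w′)` over the truncated simplex
`Ω = {w ∈ Δ_{K×M} : w(i,j) ≥ ε}` admits a Lagrange multiplier `λ ∈ ℝ` for the
sum-to-one constraint and non-negative multipliers `μ(i,j)` for the lower
bounds such that `w(i,j) = w′(i,j)·exp(η(j)·(−m(i) + λ + μ(i,j)))`, with
complementary slackness `μ(i,j) = 0` whenever `w(i,j) > ε`. -/
theorem kkt_truncated_entropic_update (K M : ℕ) (hK : 1 ≤ K) (hM : 1 ≤ M)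
    (w' : Fin K → Fin M → ℝ) (hw' : ∀ i j, 0 < w' i j)
    (m : Fin K → ℝ) (mt : Fin K → Fin M → ℝ) (hmt : ∀ i j, mt i j = m i)
    (η : Fin M → ℝ) (hη : ∀ j, 0 < η j)
    (ε : ℝ) (hε : 0 < ε) (hKMε : (K : ℝ) * M * ε < 1)
    (ψ : (Fin K → Fin M → ℝ) → ℝ)
    (hψ : ∀ w, ψ w = ∑ i, ∑ j, (1 / η j) * w i j * Real.log (w i j))
    (D : (Fin K → Fin M → ℝ) → (Fin K → Fin M → ℝ) → ℝ)
    (hD : ∀ y x, D y x = ψ y - ψ x -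
      ∑ i, ∑ j, (1 / η j) * (Real.log (x i j) + 1) * (y i j - x i j))
    (Ω : Set (Fin K → Fin M → ℝ))
    (hΩ : Ω = {w | (∀ i j, ε ≤ w i j) ∧ ∑ i, ∑ j, w i j = 1})
    (w : Fin K → Fin M → ℝ) (hwΩ : w ∈ Ω)
    (hwmin : ∀ v ∈ Ω,
      (∑ i, ∑ j, mt i j * w i j) + D w w' ≤
      (∑ i, ∑ j, mt i j * v i j) + D v w') :
    ∃ (lam : ℝ) (μ : Fin K → Fin M → ℝ),
      (∀ i j, 0 ≤ μ i j) ∧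
      (∀ i j, w i j = w' i j * Real.exp (η j * (-m i + lam + μ i j))) ∧
      (∀ i j, ε < w i j → μ i j = 0) :=
  kkt_truncated_entropic_update_general K M w' hw' m mt hmt η hη ε hε ψ hψ D hD Ω hΩ w hwΩ hwmin
end
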